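/- arXiv:2010.05833 — 5 statements merged into one kernel-verified Lean document; each statement's English description precedes it below -/
import Mathlib

section
/- Let $P_m$ denote the path graph on $m$ vertices. Then the number of rooted spanning forests of $P_{2n+1}$ (spanning forests with one chosen root per component) equals $\Phi_{4n+2}$, the $(4n+2)$-th Fibonacci number. -/
/-- The number of rooted spanning forests of `G`: pairs of a spanning acyclic subgraph
(given by its edge set, isolated vertices allowed) together with a choice of one root in
each connected component. -/
noncomputable def rootedSpanningForestCard {V : Type*} [Fintype V] (G : SimpleGraph V) : ℕ :=
  Nat.card (Σ F : {F : Set (Sym2 V) // F ⊆ G.edgeSet ∧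
      (SimpleGraph.fromEdgeSet F).IsAcyclic},
    {f : (SimpleGraph.fromEdgeSet F.1).ConnectedComponent → V //
      ∀ c, (SimpleGraph.fromEdgeSet F.1).connectedComponentMk (f c) = c})

/-!
A rooted spanning forest of the path `0 — 1 — ⋯ — k` is recorded by the word
`w v = compare v (root of the component of v)`. The edges of the forest can be read off the word
(the edge `{i, i+1}` is present iff `w i = lt` or `w (i+1) = gt`), and then so can the roots.
This identifies the rooted spanning forests with the words having `w 0 ≠ gt`, `w k ≠ lt` and no
`lt` immediately followed by `gt`. Counted by their last letter `lt`, `eq`, `gt`, the words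
satisfying the first and third condition number `Φ_{2k+1}`, `Φ_{2k+1}`, `Φ_{2k}`, and the
forest codes of length `k+1` are those of length `k+2` ending in `gt` with that letter removed.
-/

lemma SimpleGraph.Reachable.apply_eq_of_forall_adj {V β : Type*} {G : SimpleGraph V} {f : V → β}
    (h : ∀ a b, G.Adj a b → f a = f b) {u v : V} (hr : G.Reachable u v) : f u = f v := by
  simpa [Relation.reflTransGen_eq_self] using
    ((reachable_iff_reflTransGen u v).1 hr).lift f fun a b hab => h a b hab

lemma Ordering.sum_univ {M : Type*} [AddCommMonoid M] (g : Ordering → M) :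
    ∑ o, g o = g .lt + g .eq + g .gt := by
  simp [Finset.univ, Fintype.elems, add_assoc]

lemma Nat.card_subtype_eq_sum_card_fiberwise {α β : Type*} [Finite α] [Fintype β] (p : α → Prop)
    (g : α → β) : Nat.card {a // p a} = ∑ b, Nat.card {a // p a ∧ g a = b} := by
  rw [← Nat.card_congr (Equiv.sigmaFiberEquiv fun a : {a // p a} => g a), Nat.card_sigma]
  exact Finset.sum_congr rfl fun b _ =>
    Nat.card_congr (Equiv.subtypeSubtypeEquivSubtypeInter p (g · = b))

namespace SimpleGraph

def RootedSpanningForest {V : Type*} (G : SimpleGraph V) : Type _ :=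
  Σ F : {F : Set (Sym2 V) // F ⊆ G.edgeSet ∧ (fromEdgeSet F).IsAcyclic},
    {f : (fromEdgeSet F.1).ConnectedComponent → V //
      ∀ c, (fromEdgeSet F.1).connectedComponentMk (f c) = c}


variable {k : ℕ}

def pathEdge (i : Fin k) : Sym2 (Fin (k + 1)) := s(i.castSucc, i.succ)

lemma pathEdge_injective : Function.Injective (pathEdge (k := k)) := by
  intro i j h
  rcases Sym2.eq_iff.1 h with ⟨h, -⟩ | ⟨h₁, h₂⟩
  · exact Fin.castSucc_injective _ h
  · simp only [Fin.ext_iff, Fin.val_castSucc, Fin.val_succ] at h₁ h₂; omega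

lemma edgeSet_pathGraph_succ : (pathGraph (k + 1)).edgeSet = Set.range pathEdge := by
  ext e
  induction e using Sym2.ind with
  | _ u v =>
    simp only [mem_edgeSet, pathGraph_adj, Set.mem_range, pathEdge, Sym2.eq_iff, Fin.ext_iff,
      Fin.val_castSucc, Fin.val_succ]
    constructor
    · rintro (h | h)
      · exact ⟨⟨u, by omega⟩, Or.inl ⟨rfl, h⟩⟩
      · exact ⟨⟨v, by omega⟩, Or.inr ⟨rfl, h⟩⟩
    · rintro ⟨i, h | h⟩ <;> omega

lemma isTree_pathGraph (k : ℕ) : (pathGraph (k + 1)).IsTree := by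
  rw [isTree_iff_connected_and_card, edgeSet_pathGraph_succ,
    Nat.card_range_of_injective pathEdge_injective]
  exact ⟨pathGraph_connected k, by simp⟩

variable {F : Set (Sym2 (Fin (k + 1)))}

lemma isAcyclic_fromEdgeSet_of_subset_pathGraph (hF : F ⊆ (pathGraph (k + 1)).edgeSet) :
    (fromEdgeSet F).IsAcyclic :=
  (isTree_pathGraph k).isAcyclic.anti ((fromEdgeSet_le _).2 (Set.sdiff_subset.trans hF))

lemma adj_of_pathEdge_mem {i : Fin k} (h : pathEdge i ∈ F) :
    (fromEdgeSet F).Adj i.castSucc i.succ :=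
  (fromEdgeSet_adj F).2 ⟨h, (Fin.castSucc_lt_succ (i := i)).ne⟩

lemma le_castSucc_iff_of_reachable (hF : F ⊆ (pathGraph (k + 1)).edgeSet) {i : Fin k}
    (hi : pathEdge i ∉ F) {u v : Fin (k + 1)} (h : (fromEdgeSet F).Reachable u v) :
    u ≤ i.castSucc ↔ v ≤ i.castSucc := by
  refine (h.apply_eq_of_forall_adj (f := (· ≤ i.castSucc)) fun a b hab => ?_).to_iff
  obtain ⟨hab, -⟩ := (fromEdgeSet_adj F).1 hab
  obtain ⟨j, hj⟩ := edgeSet_pathGraph_succ ▸ hF hab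
  have hji : j ≠ i := by rintro rfl; exact hi (hj ▸ hab)
  rw [pathEdge, Sym2.eq_iff] at hj
  simp only [Fin.le_def, Fin.ext_iff, Fin.val_castSucc, Fin.val_succ] at hj hji ⊢
  apply propext
  omega

lemma reachable_of_forall_pathEdge_mem {a b : Fin (k + 1)} (hab : a ≤ b)
    (h : ∀ i : Fin k, a ≤ i.castSucc → i.castSucc < b → pathEdge i ∈ F) :
    (fromEdgeSet F).Reachable a b := by
  induction b using Fin.induction with
  | zero => rw [Fin.le_zero_iff.1 hab]
  | succ i ih =>
    rcases hab.eq_or_lt with rfl | hlt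
    · rfl
    have hai : a ≤ i.castSucc := Fin.le_castSucc_iff.2 hlt
    refine (ih hai fun j hj hji => h j hj (hji.trans (Fin.castSucc_lt_succ (i := i)))).trans
      (adj_of_pathEdge_mem (h i hai (Fin.castSucc_lt_succ (i := i)))).reachable

end SimpleGraph

open SimpleGraph

namespace PathForest

variable {k : ℕ}

def IsCodePrefix (w : Fin (k + 1) → Ordering) : Prop :=
  w 0 ≠ .gt ∧ ∀ i : Fin k, ¬(w i.castSucc = .lt ∧ w i.succ = .gt)

def IsForestCode (w : Fin (k + 1) → Ordering) : Prop :=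
  IsCodePrefix w ∧ w (Fin.last k) ≠ .lt

def codeEdges (w : Fin (k + 1) → Ordering) : Set (Sym2 (Fin (k + 1))) :=
  pathEdge '' {i | w i.castSucc = .lt ∨ w i.succ = .gt}

lemma codeEdges_subset (w : Fin (k + 1) → Ordering) :
    codeEdges w ⊆ (pathGraph (k + 1)).edgeSet :=
  edgeSet_pathGraph_succ ▸ Set.image_subset_range _ _

lemma pathEdge_mem_codeEdges {w : Fin (k + 1) → Ordering} {i : Fin k} :
    pathEdge i ∈ codeEdges w ↔ w i.castSucc = .lt ∨ w i.succ = .gt :=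
  pathEdge_injective.mem_set_image

def IsRootOf (w : Fin (k + 1) → Ordering) (r v : Fin (k + 1)) : Prop :=
  w r = .eq ∧ (∀ j, v ≤ j → j < r → w j = .lt) ∧ ∀ j, r < j → j ≤ v → w j = .gt

variable {w : Fin (k + 1) → Ordering} {r r' v : Fin (k + 1)}

lemma isRootOf_self (h : w v = .eq) : IsRootOf w v v :=
  ⟨h, fun _ hj hj' => absurd hj (not_le.2 hj'), fun _ hj hj' => absurd hj' (not_le.2 hj)⟩

namespace IsRootOf

lemma compare_eq (h : IsRootOf w r v) : compare v r = w v := by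
  rcases lt_trichotomy v r with hvr | rfl | hrv
  · rw [compare_lt_iff_lt.2 hvr, h.2.1 v le_rfl hvr]
  · rw [compare_eq_iff_eq.2 rfl, h.1]
  · rw [compare_gt_iff_gt.2 hrv, h.2.2 v hrv le_rfl]

lemma unique (h : IsRootOf w r v) (h' : IsRootOf w r' v) : r = r' := by
  by_contra hne
  wlog hrr' : r < r' generalizing r r'
  · exact this h' h (Ne.symm hne) ((not_lt.1 hrr').lt_of_ne (Ne.symm hne))
  rcases le_or_gt v r with hvr | hrv
  · simpa [h.1] using h'.2.1 r hvr hrr'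
  rcases lt_or_ge v r' with hvr' | hrv'
  · simpa [h.2.2 v hrv le_rfl] using h'.2.1 v le_rfl hvr'
  · simpa [h'.1] using h.2.2 r' hrr' hrv'

lemma of_succ {i : Fin k} (h : IsRootOf w r i.succ) (hi : w i.castSucc = .lt) :
    IsRootOf w r i.castSucc := by
  have hir : i.castSucc < r := by
    by_contra! hri
    rcases hri.eq_or_lt with rfl | hri
    · simp [h.1] at hi
    · simpa [hi] using h.2.2 _ hri Fin.castSucc_lt_succ.le
  refine ⟨h.1, fun j hij hjr => ?_, fun j hrj hji => absurd (hir.trans hrj) (not_lt.2 hji)⟩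
  rcases hij.eq_or_lt with rfl | hij
  · exact hi
  · exact h.2.1 j (Fin.castSucc_lt_iff_succ_le.1 hij) hjr

lemma of_castSucc {i : Fin k} (h : IsRootOf w r i.castSucc) (hi : w i.succ = .gt) :
    IsRootOf w r i.succ := by
  have hri : r < i.succ := by
    by_contra! hir
    rcases hir.eq_or_lt with rfl | hir
    · simp [h.1] at hi
    · simpa [hi] using h.2.1 _ Fin.castSucc_lt_succ.le hir
  refine ⟨h.1, fun j hij hjr => absurd (hij.trans_lt hjr) (not_lt.2 hri.le), fun j hrj hji => ?_⟩
  rcases hji.eq_or_lt with rfl | hji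
  · exact hi
  · exact h.2.2 j hrj (Fin.le_castSucc_iff.2 hji)

lemma reachable (h : IsRootOf w r v) : (fromEdgeSet (codeEdges w)).Reachable v r := by
  rcases le_total v r with hvr | hrv
  · exact reachable_of_forall_pathEdge_mem hvr fun i hvi hir =>
      pathEdge_mem_codeEdges.2 (Or.inl (h.2.1 _ hvi hir))
  · exact (reachable_of_forall_pathEdge_mem hrv fun i hri hiv => pathEdge_mem_codeEdges.2
      (Or.inr (h.2.2 _ (Fin.le_castSucc_iff.1 hri) (Fin.castSucc_lt_iff_succ_le.1 hiv)))).symm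

end IsRootOf

lemma exists_isRootOf_of_ne_gt (hw : IsForestCode w) (hv : w v ≠ .gt) : ∃ r, IsRootOf w r v := by
  induction v using Fin.reverseInduction with
  | last =>
    cases h : w (Fin.last k)
    · exact absurd h hw.2
    · exact ⟨_, isRootOf_self h⟩
    · exact absurd h hv
  | cast i ih =>
    cases h : w i.castSucc
    · obtain ⟨r, hr⟩ := ih fun h' => hw.1.2 i ⟨h, h'⟩
      exact ⟨r, hr.of_succ h⟩
    · exact ⟨_, isRootOf_self h⟩
    · exact absurd h hv

lemma exists_isRootOf_of_ne_lt (hw : IsForestCode w) (hv : w v ≠ .lt) : ∃ r, IsRootOf w r v := by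
  induction v using Fin.induction with
  | zero =>
    cases h : w 0
    · exact absurd h hv
    · exact ⟨_, isRootOf_self h⟩
    · exact absurd h hw.1.1
  | succ i ih =>
    cases h : w i.succ
    · exact absurd h hv
    · exact ⟨_, isRootOf_self h⟩
    · obtain ⟨r, hr⟩ := ih fun h' => hw.1.2 i ⟨h', h⟩
      exact ⟨r, hr.of_castSucc h⟩

lemma exists_isRootOf (hw : IsForestCode w) (v : Fin (k + 1)) : ∃ r, IsRootOf w r v := by
  by_cases hv : w v = .gt
  · exact exists_isRootOf_of_ne_lt hw (by simp [hv])
  · exact exists_isRootOf_of_ne_gt hw hv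

noncomputable def codeRoot (hw : IsForestCode w) (v : Fin (k + 1)) : Fin (k + 1) :=
  (exists_isRootOf hw v).choose

lemma isRootOf_codeRoot (hw : IsForestCode w) (v : Fin (k + 1)) :
    IsRootOf w (codeRoot hw v) v :=
  (exists_isRootOf hw v).choose_spec

lemma codeRoot_eq_of_adj (hw : IsForestCode w) {a b : Fin (k + 1)}
    (hab : (fromEdgeSet (codeEdges w)).Adj a b) : codeRoot hw a = codeRoot hw b := by
  obtain ⟨⟨i, hi, he⟩, -⟩ := (fromEdgeSet_adj _).1 hab
  have key : codeRoot hw i.castSucc = codeRoot hw i.succ := by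
    rcases hi with hi | hi
    · exact (isRootOf_codeRoot hw _).unique ((isRootOf_codeRoot hw _).of_succ hi)
    · exact ((isRootOf_codeRoot hw _).of_castSucc hi).unique (isRootOf_codeRoot hw _)
  rcases Sym2.eq_iff.1 he with ⟨rfl, rfl⟩ | ⟨rfl, rfl⟩
  exacts [key, key.symm]

variable {F : Set (Sym2 (Fin (k + 1)))} {f : (fromEdgeSet F).ConnectedComponent → Fin (k + 1)}

def forestCode (f : (fromEdgeSet F).ConnectedComponent → Fin (k + 1)) (v : Fin (k + 1)) :
    Ordering :=
  compare v (f ((fromEdgeSet F).connectedComponentMk v))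

lemma root_le_castSucc_iff (hF : F ⊆ (pathGraph (k + 1)).edgeSet)
    (hf : ∀ c, (fromEdgeSet F).connectedComponentMk (f c) = c) {i : Fin k} (hi : pathEdge i ∉ F)
    (v : Fin (k + 1)) :
    f ((fromEdgeSet F).connectedComponentMk v) ≤ i.castSucc ↔ v ≤ i.castSucc :=
  le_castSucc_iff_of_reachable hF hi (ConnectedComponent.exact (hf _))

lemma forestCode_isForestCode (hF : F ⊆ (pathGraph (k + 1)).edgeSet)
    (hf : ∀ c, (fromEdgeSet F).connectedComponentMk (f c) = c) : IsForestCode (forestCode f) := by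
  refine ⟨⟨by simp [forestCode, compare_gt_iff_gt], fun i ⟨hlt, hgt⟩ => ?_⟩,
    by simp [forestCode, compare_lt_iff_lt, Fin.le_last]⟩
  rw [forestCode, compare_lt_iff_lt] at hlt
  rw [forestCode, compare_gt_iff_gt] at hgt
  by_cases hi : pathEdge i ∈ F
  · rw [ConnectedComponent.connectedComponentMk_eq_of_adj (adj_of_pathEdge_mem hi)] at hlt
    exact (Fin.castSucc_lt_iff_succ_le.1 hlt).not_gt hgt
  · exact ((root_le_castSucc_iff hF hf hi _).2 le_rfl).not_gt hlt

lemma codeEdges_forestCode (hF : F ⊆ (pathGraph (k + 1)).edgeSet)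
    (hf : ∀ c, (fromEdgeSet F).connectedComponentMk (f c) = c) : codeEdges (forestCode f) = F := by
  ext e
  constructor
  · rintro ⟨i, hi, rfl⟩
    by_contra hne
    rcases hi with hlt | hgt
    · rw [forestCode, compare_lt_iff_lt] at hlt
      exact ((root_le_castSucc_iff hF hf hne _).2 le_rfl).not_gt hlt
    · rw [forestCode, compare_gt_iff_gt] at hgt
      exact Fin.castSucc_lt_succ.not_ge
        ((root_le_castSucc_iff hF hf hne _).1 (Fin.le_castSucc_iff.2 hgt))
  · intro he
    obtain ⟨i, rfl⟩ := edgeSet_pathGraph_succ ▸ hF he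
    rw [pathEdge_mem_codeEdges, forestCode, forestCode, compare_lt_iff_lt, compare_gt_iff_gt,
      ← ConnectedComponent.connectedComponentMk_eq_of_adj (adj_of_pathEdge_mem he)]
    exact (lt_or_ge _ _).imp_right Fin.le_castSucc_iff.1

lemma IsRootOf.root_eq (hF : F ⊆ (pathGraph (k + 1)).edgeSet)
    (hf : ∀ c, (fromEdgeSet F).connectedComponentMk (f c) = c) {r v : Fin (k + 1)}
    (h : IsRootOf (forestCode f) r v) : f ((fromEdgeSet F).connectedComponentMk v) = r := by
  rw [ConnectedComponent.sound (codeEdges_forestCode hF hf ▸ h.reachable)]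
  exact (compare_eq_iff_eq.1 h.1).symm

def toCode (S : RootedSpanningForest (pathGraph (k + 1))) :
    {w : Fin (k + 1) → Ordering // IsForestCode w} :=
  ⟨forestCode S.2.1, forestCode_isForestCode S.1.2.1 S.2.2⟩

noncomputable def ofCode (w : {w : Fin (k + 1) → Ordering // IsForestCode w}) :
    RootedSpanningForest (pathGraph (k + 1)) :=
  ⟨⟨codeEdges w.1, codeEdges_subset w.1,
      isAcyclic_fromEdgeSet_of_subset_pathGraph (codeEdges_subset w.1)⟩,
    ⟨ConnectedComponent.lift (codeRoot w.2) fun _ _ p _ =>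
      Reachable.apply_eq_of_forall_adj (fun _ _ => codeRoot_eq_of_adj w.2) ⟨p⟩,
    ConnectedComponent.ind fun v =>
      (ConnectedComponent.sound (isRootOf_codeRoot w.2 v).reachable).symm⟩⟩

lemma toCode_ofCode (w : {w : Fin (k + 1) → Ordering // IsForestCode w}) :
    toCode (ofCode w) = w :=
  Subtype.ext <| funext fun v => (isRootOf_codeRoot w.2 v).compare_eq

lemma toCode_injective : Function.Injective (toCode (k := k)) := by
  rintro ⟨⟨F₁, hF₁, _⟩, f₁, hf₁⟩ ⟨⟨F₂, hF₂, _⟩, f₂, hf₂⟩ h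
  have hw : forestCode f₁ = forestCode f₂ := congrArg Subtype.val h
  obtain rfl : F₁ = F₂ := by
    rw [← codeEdges_forestCode hF₁ hf₁, ← codeEdges_forestCode hF₂ hf₂, hw]
  obtain rfl : f₁ = f₂ := funext <| ConnectedComponent.ind fun v => by
    obtain ⟨r, hr⟩ := exists_isRootOf (forestCode_isForestCode hF₁ hf₁) v
    have hr₂ : IsRootOf (forestCode f₂) r v := hw ▸ hr
    rw [hr.root_eq hF₁ hf₁, hr₂.root_eq hF₂ hf₂]
  rfl

lemma card_rootedSpanningForest_pathGraph (k : ℕ) :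
    Nat.card (RootedSpanningForest (pathGraph (k + 1))) =
      Nat.card {w : Fin (k + 1) → Ordering // IsForestCode w} :=
  Nat.card_eq_of_bijective toCode ⟨toCode_injective, fun w => ⟨ofCode w, toCode_ofCode w⟩⟩

lemma isCodePrefix_snoc {v : Fin (k + 1) → Ordering} {o : Ordering} :
    IsCodePrefix (Fin.snoc v o : Fin (k + 2) → Ordering) ↔
      IsCodePrefix v ∧ ¬(v (Fin.last k) = .lt ∧ o = .gt) := by
  simp only [IsCodePrefix, Fin.forall_fin_succ', Fin.succ_castSucc, Fin.succ_last,
    Fin.snoc_castSucc, Fin.snoc_last, ← Fin.castSucc_zero, and_assoc]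

def codePrefixSnocEquiv (o : Ordering) :
    {w : Fin (k + 2) → Ordering // IsCodePrefix w ∧ w (Fin.last (k + 1)) = o} ≃
      {v : Fin (k + 1) → Ordering // IsCodePrefix v ∧ ¬(v (Fin.last k) = .lt ∧ o = .gt)} where
  toFun w := ⟨Fin.init w.1, isCodePrefix_snoc.1 (by
    have h := w.2.1
    rwa [← Fin.snoc_init_self w.1, w.2.2] at h)⟩
  invFun v := ⟨Fin.snoc v.1 o, isCodePrefix_snoc.2 v.2, Fin.snoc_last _ _⟩
  left_inv w := Subtype.ext (by simpa [w.2.2] using Fin.snoc_init_self w.1)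
  right_inv v := Subtype.ext (Fin.init_snoc (α := fun _ => Ordering) _ _)

noncomputable def endCount (k : ℕ) (o : Ordering) : ℕ :=
  Nat.card {w : Fin (k + 1) → Ordering // IsCodePrefix w ∧ w (Fin.last k) = o}

lemma endCount_zero (o : Ordering) : endCount 0 o = if o = .gt then 0 else 1 := by
  rw [endCount, Nat.card_congr (Equiv.subtypeEquiv (Equiv.funUnique (Fin 1) Ordering)
    (q := fun a => a ≠ .gt ∧ a = o) fun w => by simp [IsCodePrefix]), Nat.card_eq_fintype_card]
  cases o <;> decide

lemma endCount_succ (k : ℕ) (o : Ordering) :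
    endCount (k + 1) o = ∑ o', if o' = .lt ∧ o = .gt then 0 else endCount k o' := by
  rw [endCount, Nat.card_congr (codePrefixSnocEquiv o),
    Nat.card_subtype_eq_sum_card_fiberwise _ fun v => v (Fin.last k)]
  refine Finset.sum_congr rfl fun o' _ => ?_
  split_ifs with h
  · obtain ⟨rfl, rfl⟩ := h
    exact Nat.card_eq_zero.2 (.inl ⟨fun v => v.2.1.2 ⟨v.2.2, rfl⟩⟩)
  · refine Nat.card_congr (Equiv.subtypeEquivRight fun v => ?_)
    grind

lemma endCount_eq (k : ℕ) (o : Ordering) :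
    endCount k o = if o = .gt then Nat.fib (2 * k) else Nat.fib (2 * k + 1) := by
  induction k generalizing o with
  | zero => rw [endCount_zero]; cases o <;> rfl
  | succ k ih =>
    have h₂ : Nat.fib (2 * (k + 1)) = Nat.fib (2 * k) + Nat.fib (2 * k + 1) := Nat.fib_add_two
    have h₃ : Nat.fib (2 * (k + 1) + 1) = Nat.fib (2 * k + 1) + Nat.fib (2 * (k + 1)) :=
      Nat.fib_add_two
    simp only [endCount_succ, Ordering.sum_univ, ih]
    cases o <;> simp <;> omega

lemma card_isForestCode (k : ℕ) :
    Nat.card {w : Fin (k + 1) → Ordering // IsForestCode w} = Nat.fib (2 * k + 2) := by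
  calc Nat.card {w : Fin (k + 1) → Ordering // IsForestCode w}
      = endCount (k + 1) .gt := by
        rw [endCount, Nat.card_congr (codePrefixSnocEquiv .gt)]
        simp [IsForestCode]
    _ = Nat.fib (2 * k + 2) := by simp [endCount_eq, mul_add]

end PathForest

open PathForest in
theorem rootedSpanningForestCard_pathGraph (k : ℕ) :
    rootedSpanningForestCard (pathGraph (k + 1)) = Nat.fib (2 * k + 2) :=
  (card_rootedSpanningForest_pathGraph k).trans (card_isForestCode k)

/-- The path graph on `2n+1` vertices has `Φ_{4n+2}` rooted spanning
forests. -/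
theorem stmt8 (n : ℕ) :
    rootedSpanningForestCard (SimpleGraph.pathGraph (2 * n + 1)) =
      Nat.fib (4 * n + 2) := by
  rw [rootedSpanningForestCard_pathGraph]
  ring_nf
end

section
/- For the cycle graph $C_m$ on $m \geq 3$ vertices, $\det(L(C_m) + I) = \Phi_{2m-1} + \Phi_{2m+1} - 2$, where $L(C_m)$ is the graph Laplacian and $\Phi_k$ is the $k$-th Fibonacci number with $\Phi_1 = \Phi_2 = 1$. -/
/-!
Let `P` be the permutation matrix of the rotation `i ↦ i + 1` of `Fin m`. For `m ≥ 3` the cycle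
has degree two everywhere and its adjacency matrix is `P + Pᵀ`, so `L(C_m) + I = 3 - P - Pᵀ`.
Since `Pᵀ P = 1`, `φ² ψ² = 1` and `φ² + ψ² = 3`, we get `(3 - P - Pᵀ) P = -(φ² - P)(ψ² - P)`.
For a cyclic permutation of all `m` points only two terms survive in the Leibniz expansion of
`det (c - P)`, giving `c ^ m - 1`; with `det P = (-1) ^ (m + 1)` this yields
`det (L(C_m) + I) = φ ^ (2m) + ψ ^ (2m) - 2`, and `φ ^ k + ψ ^ k = F (k - 1) + F (k + 1)` by Binet.
-/

open Finset Equiv Matrix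

namespace Equiv.Perm

variable {α : Type*} [Fintype α] [DecidableEq α]

theorem IsCycle.eq_one_or_eq_of_forall_apply_eq_or_eq {σ τ : Perm α} (hσ : σ.IsCycle)
    (hsupp : σ.support = univ) (hτ : ∀ x, τ x = x ∨ τ x = σ x) : τ = 1 ∨ τ = σ := by
  have hmoves : ∀ y, σ y ≠ y := fun y => mem_support.mp (hsupp ▸ mem_univ y)
  refine or_iff_not_imp_left.mpr fun hτ1 => ?_
  obtain ⟨x, hx⟩ : ∃ x, τ x ≠ x := not_forall.mp fun h => hτ1 (Equiv.ext h)
  -- once `τ` moves one point along the cycle, injectivity forces it to move the next one too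
  have horbit : ∀ k : ℕ, τ ((σ ^ k) x) = (σ ^ (k + 1)) x := by
    intro k
    induction k with
    | zero => simpa using (hτ x).resolve_left hx
    | succ k ih =>
      rw [pow_succ' σ (k + 1), mul_apply]
      refine (hτ _).resolve_left fun hfix => hmoves ((σ ^ k) x) (τ.injective ?_)
      rw [← mul_apply σ (σ ^ k), ← pow_succ', hfix, ih]
  ext y
  obtain ⟨k, rfl⟩ := hσ.exists_pow_eq (hmoves x) (hmoves y)
  rw [horbit, pow_succ', mul_apply]

end Equiv.Perm

namespace Matrix

variable {n R : Type*} [Fintype n] [DecidableEq n] [CommRing R]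

theorem transpose_permMatrix_mul_permMatrix (σ : Perm n) :
    (σ.permMatrix R)ᵀ * σ.permMatrix R = 1 := by
  rw [transpose_permMatrix, ← permMatrix_mul, mul_inv_cancel, permMatrix_one]

theorem det_smul_one_sub_permMatrix_of_isCycle {σ : Perm n} (hσ : σ.IsCycle)
    (hsupp : σ.support = univ) (c : R) :
    (c • 1 - σ.permMatrix R).det = c ^ Fintype.card n - 1 := by
  have hmoves : ∀ x, σ x ≠ x := fun x => Perm.mem_support.mp (hsupp ▸ mem_univ x)
  have hentry : ∀ i j, (c • 1 - σ.permMatrix R) i j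
      = (if i = j then c else 0) - (if σ i = j then 1 else 0) := by
    intro i j
    simp [one_apply, PEquiv.toMatrix_apply]
  have hne : (1 : Perm n) ≠ σ⁻¹ := by
    obtain ⟨x, hx, -⟩ := hσ
    exact fun h => hx (by simpa using congrArg (· (σ x)) h)
  -- in the Leibniz expansion only the identity and `σ⁻¹` avoid the zero entries
  rw [det_apply', Fintype.sum_eq_add 1 σ⁻¹ hne]
  · have hdiag : ∏ i, (c • 1 - σ.permMatrix R) ((1 : Perm n) i) i = c ^ Fintype.card n := by
      simp [hentry, hmoves]
    have hshift : ∏ i, (c • 1 - σ.permMatrix R) (σ⁻¹ i) i = (-1) ^ Fintype.card n := by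
      simp [hentry, Equiv.symm_apply_eq, fun x => (hmoves x).symm]
    rw [hdiag, hshift, Perm.sign_one, Perm.sign_inv, hσ.sign, hsupp, card_univ]
    simp [← mul_pow]
    ring
  · rintro τ ⟨hτ1, hτσ⟩
    obtain ⟨i, hi⟩ : ∃ i, τ i ≠ i ∧ τ i ≠ σ⁻¹ i := by
      by_contra! h
      rcases hσ.inv.eq_one_or_eq_of_forall_apply_eq_or_eq (by rw [Perm.support_inv, hsupp])
        (fun x => or_iff_not_imp_left.mpr (h x)) with h | h
      exacts [hτ1 h, hτσ h]
    refine mul_eq_zero_of_right _ (prod_eq_zero (mem_univ i) ?_)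
    rw [hentry, if_neg hi.1, if_neg fun h => hi.2 (Perm.eq_inv_iff_eq.mpr h)]
    simp

theorem add_smul_one_sub_sub_transpose_mul {P : Matrix n n R} (hP : Pᵀ * P = 1)
    {a b : R} (hab : a * b = 1) :
    ((a + b) • 1 - P - Pᵀ) * P = -((a • 1 - P) * (b • 1 - P)) := by
  simp only [sub_mul, mul_sub, smul_mul_assoc, mul_smul_comm, Matrix.one_mul, Matrix.mul_one, hP]
  linear_combination (norm := module) hab • (1 : Matrix n n R)

theorem det_add_smul_one_sub_permMatrix_sub_transpose_of_isCycle {σ : Perm n}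
    (hσ : σ.IsCycle) (hsupp : σ.support = univ) {a b : R} (hab : a * b = 1) :
    ((a + b) • 1 - σ.permMatrix R - (σ.permMatrix R)ᵀ).det
      = a ^ Fintype.card n + b ^ Fintype.card n - 2 := by
  set D := ((a + b) • 1 - σ.permMatrix R - (σ.permMatrix R)ᵀ).det
  set s : R := (-1) ^ Fintype.card n
  have h := congrArg det
    (add_smul_one_sub_sub_transpose_mul (transpose_permMatrix_mul_permMatrix σ) hab)
  rw [det_mul, det_neg, det_mul, det_smul_one_sub_permMatrix_of_isCycle hσ hsupp,
    det_smul_one_sub_permMatrix_of_isCycle hσ hsupp, det_permutation, hσ.sign, hsupp,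
    card_univ] at h
  push_cast at h
  have hsq : s ^ 2 = 1 := by rw [← pow_mul, pow_mul', neg_one_sq, one_pow]
  have hpow : a ^ Fintype.card n * b ^ Fintype.card n = 1 := by rw [← mul_pow, hab, one_pow]
  linear_combination (-s) * h
    + (a ^ Fintype.card n + b ^ Fintype.card n - 2 - D) * hsq - s ^ 2 * hpow

end Matrix

namespace SimpleGraph

theorem lapMatrix_map {V R S : Type*} [Fintype V] [DecidableEq V] [Ring R] [Ring S]
    (G : SimpleGraph V) [DecidableRel G.Adj] (f : R →+* S) :
    (G.lapMatrix R).map f = G.lapMatrix S := by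
  ext i j
  by_cases h : i = j <;> simp [lapMatrix, degMatrix, adjMatrix_apply, h, apply_ite f]

variable {R : Type*} [CommRing R]

theorem adjMatrix_cycleGraph {m : ℕ} (hm : 3 ≤ m) :
    (cycleGraph m).adjMatrix R
      = (finRotate m).permMatrix R + ((finRotate m).permMatrix R)ᵀ := by
  obtain ⟨k, rfl⟩ := Nat.exists_eq_add_of_le' hm
  have htwo : ∀ i : Fin (k + 3), i + 1 + 1 ≠ i := by
    intro i h
    rw [add_assoc, add_eq_left, Fin.ext_iff, Fin.val_add, Fin.val_one] at h
    simp [Nat.mod_eq_of_lt] at h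
  ext i j
  simp only [adjMatrix_apply, cycleGraph_adj, sub_eq_iff_eq_add, Matrix.add_apply,
    transpose_apply, PEquiv.toMatrix_apply, toPEquiv_apply, Option.mem_def, Option.some_inj,
    finRotate_apply]
  rw [add_comm 1 j, add_comm 1 i]
  rcases eq_or_ne i (j + 1) with rfl | h₁
  · simp [htwo]
  rcases eq_or_ne (i + 1) j with rfl | h₂
  · simp [htwo]
  · simp [h₁, h₂, h₁.symm, h₂.symm]

theorem lapMatrix_cycleGraph {m : ℕ} (hm : 3 ≤ m) :
    (cycleGraph m).lapMatrix R
      = (2 : R) • 1 - (finRotate m).permMatrix R - ((finRotate m).permMatrix R)ᵀ := by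
  rw [lapMatrix, adjMatrix_cycleGraph hm, sub_sub]
  congr 1
  obtain ⟨k, rfl⟩ := Nat.exists_eq_add_of_le' hm
  ext i j
  simp [degMatrix, cycleGraph_degree_three_le, diagonal_apply, one_apply]

end SimpleGraph

open Real goldenRatio

theorem Real.fib_sub_one_add_fib_add_one {n : ℕ} (hn : n ≠ 0) :
    (Nat.fib (n - 1) + Nat.fib (n + 1) : ℝ) = φ ^ n + ψ ^ n := by
  obtain ⟨k, rfl⟩ := Nat.exists_eq_succ_of_ne_zero hn
  rw [← goldenRatio_mul_fib_succ_add_fib, ← goldenConj_mul_fib_succ_add_fib, Nat.succ_sub_one,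
    Nat.fib_add_two]
  push_cast
  linear_combination (Nat.fib (k + 1) : ℝ) * goldenRatio_add_goldenConj

/-- For the cycle graph `C_m` on `m ≥ 3` vertices,
`det(L(C_m) + I) = Φ_{2m-1} + Φ_{2m+1} - 2`. -/
theorem stmt10 (m : ℕ) (hm : 3 ≤ m) :
    (((SimpleGraph.cycleGraph m).lapMatrix ℤ) + 1).det =
      (Nat.fib (2 * m - 1) : ℤ) + (Nat.fib (2 * m + 1) : ℤ) - 2 := by
  have hprod : φ ^ 2 * ψ ^ 2 = 1 := by
    rw [← mul_pow, goldenRatio_mul_goldenConj, neg_one_sq]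
  have hL : (SimpleGraph.cycleGraph m).lapMatrix ℝ + 1
      = (φ ^ 2 + ψ ^ 2) • 1 - (finRotate m).permMatrix ℝ - ((finRotate m).permMatrix ℝ)ᵀ := by
    have hsum : φ ^ 2 + ψ ^ 2 = 2 + 1 := by
      rw [goldenRatio_sq, goldenConj_sq, add_add_add_comm, goldenRatio_add_goldenConj]
      norm_num
    rw [SimpleGraph.lapMatrix_cycleGraph hm, hsum]
    module
  apply Int.cast_injective (α := ℝ)
  rw [← eq_intCast (Int.castRingHom ℝ), RingHom.map_det, map_add, map_one,
    RingHom.mapMatrix_apply, SimpleGraph.lapMatrix_map, hL,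
    det_add_smul_one_sub_permMatrix_sub_transpose_of_isCycle
      (isCycle_finRotate_of_le (by omega)) (support_finRotate_of_le (by omega)) hprod,
    Fintype.card_fin, ← pow_mul, ← pow_mul, ← fib_sub_one_add_fib_add_one (by omega)]
  push_cast
  ring
end

section
/- Let $G$ be a finite $2$-connected plane graph. Define the almost-tree spin graph $\widehat{G}_{aT}$ whose vertices are the spanning almost-trees of $G$ (spanning forests obtained by deleting exactly one edge from a spanning tree, equivalently spanning forests with exactly two connected components) and whose edges connect two almost-trees related by a leaf spin (removing a leaf edge of the subgraph that is not a leaf of $G$ and replacing it with another edge of $G$ incident to the same degree-one endpoint). Then $\widehat{G}_{aT}$ is connected. -/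
/-!
Fix a vertex `r`. Since `G - r` is connected, we build a spanning tree `T` of `G - r` one vertex
at a time such that every almost-tree can be moved by leaf spins to one containing `T`; the only
almost-tree containing `T` is `T` itself (with `r` isolated), and spins are reversible.

A new vertex `u` is attached by making it a leaf and spinning it onto its neighbour in `T`. To
make `a` a leaf pointing towards `o`, clear the zone of vertices hanging off `a` away from `o`:
by 2-connectivity some edge `pq` of `G` leaves the zone while avoiding `a`; clearing the smaller
zone behind `p` makes `p` a leaf, and spinning it onto `q` shrinks the zone. Spins inside a zone
do not disturb the forest outside it, so the part of `T` already built survives.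
-/

/-- A spanning almost-tree of `G`: a spanning forest (edge set `F`) with exactly two
connected components, i.e. a spanning tree with one edge removed. -/
def IsAlmostTree {V : Type*} [Fintype V] (G : SimpleGraph V) (F : Set (Sym2 V)) : Prop :=
  F ⊆ G.edgeSet ∧ (SimpleGraph.fromEdgeSet F).IsAcyclic ∧
    Nat.card ((SimpleGraph.fromEdgeSet F).ConnectedComponent) = 2

/-- A leaf spin: remove a leaf edge `e` of the subgraph `F` (its endpoint `v` has degree
one in `F`) and replace it with another edge `e'` of `G` incident to `v`. -/
def LeafSpin {V : Type*} [Fintype V] (G : SimpleGraph V) (F F' : Set (Sym2 V)) : Prop :=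
  ∃ (e e' : Sym2 V) (v : V), e ∈ F ∧ v ∈ e ∧
    Nat.card ((SimpleGraph.fromEdgeSet F).neighborSet v) = 1 ∧
    v ∈ e' ∧ e' ∈ G.edgeSet ∧ e' ∉ F ∧ F' = insert e' (F \ {e})

namespace AlmostTreeSpin

open SimpleGraph

section EdgeSets

variable {V : Type*} {F F' : Set (Sym2 V)} {e : Sym2 V} {a o p q u v w x y z : V}

def Reach (F : Set (Sym2 V)) (x y : V) : Prop := (fromEdgeSet F).Reachable x y

theorem Reach.refl (F : Set (Sym2 V)) (x : V) : Reach F x x := Reachable.refl x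

theorem Reach.symm (h : Reach F x y) : Reach F y x := Reachable.symm h

theorem Reach.trans (h : Reach F x y) (h' : Reach F y z) : Reach F x z := Reachable.trans h h'

theorem Reach.mono (hF : F ⊆ F') (h : Reach F x y) : Reach F' x y :=
  Reachable.mono (fromEdgeSet_mono hF) h

theorem reach_of_mem (he : s(x, y) ∈ F) (hxy : x ≠ y) : Reach F x y :=
  ((fromEdgeSet_adj F).2 ⟨he, hxy⟩).reachable

theorem Reach.exists_mem (h : Reach F x y) (hxy : x ≠ y) : ∃ z, s(x, z) ∈ F := by
  obtain ⟨w⟩ := h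
  cases w with
  | nil => exact absurd rfl hxy
  | cons hadj _ => exact ⟨_, ((fromEdgeSet_adj F).1 hadj).1⟩

theorem Reach.eq_of_forall_notMem (hv : ∀ e ∈ F, v ∉ e) (h : Reach F v x) : x = v := by
  obtain ⟨w⟩ := h
  cases w with
  | nil => rfl
  | cons hadj _ => exact absurd (Sym2.mem_mk_left _ _) (hv _ ((fromEdgeSet_adj F).1 hadj).1)

theorem Reach.of_forall_eq (hv : ∀ e ∈ F, v ∈ e → e = s(v, u)) (h : Reach F v x) (hvx : v ≠ x) :
    Reach F u x := by
  obtain ⟨w⟩ := h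
  cases w with
  | nil => exact absurd rfl hvx
  | cons hadj w =>
    obtain rfl := Sym2.congr_right.1 (hv _ ((fromEdgeSet_adj F).1 hadj).1 (Sym2.mem_mk_left _ _))
    exact ⟨w⟩

theorem Reach.cases_insert (h : Reach (insert s(p, q) F) x y) :
    Reach F x y ∨ (Reach F x p ∧ Reach F q y) ∨ (Reach F x q ∧ Reach F p y) := by
  obtain ⟨w⟩ := h
  induction w with
  | nil => exact Or.inl (Reach.refl _ _)
  | @cons x c y hadj _ ih =>
    obtain ⟨hmem, hne⟩ := (fromEdgeSet_adj _).1 hadj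
    rcases Set.mem_insert_iff.1 hmem with hpq | hF
    · rcases Sym2.eq_iff.1 hpq with ⟨rfl, rfl⟩ | ⟨rfl, rfl⟩ <;>
        rcases ih with h | ⟨h₁, h₂⟩ | ⟨h₁, h₂⟩ <;>
        first
        | exact Or.inl h₂
        | exact Or.inr (Or.inl ⟨Reach.refl _ _, by assumption⟩)
        | exact Or.inr (Or.inr ⟨Reach.refl _ _, by assumption⟩)
    · have hxc : Reach F x c := reach_of_mem hF hne
      rcases ih with h | ⟨h₁, h₂⟩ | ⟨h₁, h₂⟩
      exacts [Or.inl (hxc.trans h), Or.inr (Or.inl ⟨hxc.trans h₁, h₂⟩),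
        Or.inr (Or.inr ⟨hxc.trans h₁, h₂⟩)]

theorem reach_insert_iff_of_forall_notMem (hv : ∀ e ∈ F, v ∉ e) (hx : x ≠ v) (hy : y ≠ v) :
    Reach (insert s(v, w) F) x y ↔ Reach F x y := by
  refine ⟨fun h => ?_, Reach.mono (Set.subset_insert _ _)⟩
  rcases h.cases_insert with h | ⟨h, -⟩ | ⟨-, h⟩
  · exact h
  · exact absurd (h.symm.eq_of_forall_notMem hv) hx
  · exact absurd (h.eq_of_forall_notMem hv) hy

theorem not_reach_sdiff_of_isAcyclic (hF : (fromEdgeSet F).IsAcyclic) (he : s(x, y) ∈ F)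
    (hxy : x ≠ y) : ¬ Reach (F \ {s(x, y)}) x y := by
  have := isAcyclic_iff_forall_adj_isBridge.1 hF ((fromEdgeSet_adj F).2 ⟨he, hxy⟩)
  rwa [isBridge_iff, deleteEdges_fromEdgeSet] at this

theorem card_connectedComponent_eq_two_iff :
    Nat.card (fromEdgeSet F).ConnectedComponent = 2 ↔
      ∃ x y, ¬ Reach F x y ∧ ∀ z, Reach F z x ∨ Reach F z y := by
  rw [Nat.card_eq_two_iff]
  constructor
  · rintro ⟨c, d, hcd, hcd'⟩
    induction c using ConnectedComponent.ind with | h x => ?_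
    induction d using ConnectedComponent.ind with | h y => ?_
    refine ⟨x, y, fun h => hcd (ConnectedComponent.sound h), fun z => ?_⟩
    have : (fromEdgeSet F).connectedComponentMk z ∈ ({_, _} : Set _) := hcd' ▸ Set.mem_univ _
    simpa [ConnectedComponent.eq, Reach] using this
  · rintro ⟨x, y, hxy, h⟩
    refine ⟨_, _, fun h' => hxy (ConnectedComponent.exact h'), Set.eq_univ_of_forall fun c => ?_⟩
    induction c using ConnectedComponent.ind with | h z => ?_
    simpa [ConnectedComponent.eq, Reach] using h z

def eraseVert (F : Set (Sym2 V)) (v : V) : Set (Sym2 V) := {e ∈ F | v ∉ e}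

theorem eraseVert_subset : eraseVert F v ⊆ F := fun _ h => h.1

theorem forall_notMem_eraseVert : ∀ e ∈ eraseVert F v, v ∉ e := fun _ h => h.2

theorem mem_eraseVert (he : s(x, y) ∈ F) (hx : v ≠ x) (hy : v ≠ y) : s(x, y) ∈ eraseVert F v :=
  ⟨he, by simp [hx, hy]⟩

theorem eraseVert_comm : eraseVert (eraseVert F v) o = eraseVert (eraseVert F o) v := by
  ext e
  simp only [eraseVert, Set.mem_ofPred_eq]
  tauto

theorem reach_eraseVert_iff (hv : ∀ e ∈ F, v ∈ e → e = s(v, u)) (hx : x ≠ v) (hy : y ≠ v) :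
    Reach (eraseVert F v) x y ↔ Reach F x y := by
  refine ⟨Reach.mono eraseVert_subset, fun h => ?_⟩
  have hF : F ⊆ insert s(v, u) (eraseVert F v) := fun e he => by
    by_cases hve : v ∈ e
    exacts [Or.inl (hv e he hve), Or.inr ⟨he, hve⟩]
  exact (reach_insert_iff_of_forall_notMem forall_notMem_eraseVert hx hy).1 (h.mono hF)

theorem Reach.eraseVert_of_not_reach (h : Reach F x y) (ho : ¬ Reach F x o) :
    Reach (eraseVert F o) x y := by
  obtain ⟨w⟩ := h
  induction w with
  | nil => exact Reach.refl _ _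
  | @cons x c y hadj _ ih =>
    obtain ⟨hmem, hne⟩ := (fromEdgeSet_adj _).1 hadj
    have hxc : Reach F x c := reach_of_mem hmem hne
    have hco : ¬ Reach F c o := fun h => ho (hxc.trans h)
    have hxo : o ≠ x := by rintro rfl; exact ho (Reach.refl _ _)
    have hco' : o ≠ c := by rintro rfl; exact hco (Reach.refl _ _)
    exact (reach_of_mem (mem_eraseVert hmem hxo hco') hne).trans (ih hco)

structure IsLeafAt (F : Set (Sym2 V)) (v u : V) : Prop where
  mem : s(v, u) ∈ F
  ne : v ≠ u
  eq_of_mem : ∀ e ∈ F, v ∈ e → e = s(v, u)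

theorem IsLeafAt.reach (h : IsLeafAt F v u) : Reach F v u := reach_of_mem h.mem h.ne

theorem IsLeafAt.notMem (h : IsLeafAt F v u) (hwu : w ≠ u) : s(v, w) ∉ F := fun hw =>
  hwu (Sym2.congr_right.1 (h.eq_of_mem _ hw (Sym2.mem_mk_left _ _)))

theorem isLeafAt_iff_neighborSet_eq (hF : ∀ e ∈ F, ¬ e.IsDiag) :
    IsLeafAt F v u ↔ (fromEdgeSet F).neighborSet v = {u} := by
  constructor
  · intro h
    ext z
    simp only [mem_neighborSet, fromEdgeSet_adj, Set.mem_singleton_iff]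
    refine ⟨fun hz => Sym2.congr_right.1 (h.eq_of_mem _ hz.1 (Sym2.mem_mk_left _ _)), ?_⟩
    rintro rfl
    exact ⟨h.mem, h.ne⟩
  · intro h
    have hu : (fromEdgeSet F).Adj v u := by rw [← mem_neighborSet, h]; rfl
    refine ⟨((fromEdgeSet_adj F).1 hu).1, hu.ne, fun e he hve => ?_⟩
    obtain ⟨z, rfl⟩ := Sym2.mem_iff_exists.1 hve
    have hz : z ∈ (fromEdgeSet F).neighborSet v :=
      (fromEdgeSet_adj F).2 ⟨he, fun hvz => hF _ he (hvz ▸ Sym2.mk_isDiag_iff.2 rfl)⟩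
    rw [h, Set.mem_singleton_iff] at hz
    rw [hz]

theorem card_neighborSet_eq_one_iff (hF : ∀ e ∈ F, ¬ e.IsDiag) :
    Nat.card ((fromEdgeSet F).neighborSet v) = 1 ↔ ∃ u, IsLeafAt F v u := by
  simp only [Nat.card_coe_set_eq, Set.ncard_eq_one, isLeafAt_iff_neighborSet_eq hF]

def spin (F : Set (Sym2 V)) (v u w : V) : Set (Sym2 V) := insert s(v, w) (F \ {s(v, u)})

theorem eq_of_mem_spin (hv : ∀ e ∈ F, v ∈ e → e = s(v, u)) :
    ∀ e ∈ spin F v u w, v ∈ e → e = s(v, w) := by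
  rintro e (rfl | ⟨he, hne⟩) hve
  · rfl
  · exact absurd (hv e he hve) hne

theorem mem_spin_iff_of_notMem (hv : v ∉ e) : e ∈ spin F v u w ↔ e ∈ F := by
  have : ∀ t, e ≠ s(v, t) := fun t h => hv (h ▸ Sym2.mem_mk_left _ _)
  simp [spin, this]

theorem eraseVert_spin : eraseVert (spin F v u w) v = eraseVert F v := by
  ext e
  by_cases hv : v ∈ e
  · simp [eraseVert, hv]
  · simp [eraseVert, hv, mem_spin_iff_of_notMem hv]

theorem isLeafAt_spin (h : IsLeafAt F v u) (hvw : v ≠ w) : IsLeafAt (spin F v u w) v w :=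
  ⟨Set.mem_insert _ _, hvw, eq_of_mem_spin h.eq_of_mem⟩

theorem spin_spin (h : IsLeafAt F v u) (hwu : w ≠ u) : spin (spin F v u w) v w u = F := by
  rw [spin, spin, Set.insert_sdiff_self_of_notMem fun hw => h.notMem hwu hw.1,
    Set.insert_sdiff_singleton, Set.insert_eq_of_mem h.mem]

theorem reach_iff_of_eraseVert_eq (hF : ∀ e ∈ F, v ∈ e → e = s(v, u))
    (hF' : ∀ e ∈ F', v ∈ e → e = s(v, w)) (heq : eraseVert F v = eraseVert F' v)
    (hx : x ≠ v) (hy : y ≠ v) : Reach F x y ↔ Reach F' x y := by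
  rw [← reach_eraseVert_iff hF hx hy, heq, reach_eraseVert_iff hF' hx hy]

/-- What a sequence of spins at vertices of `Z` leaves unchanged. -/
structure AgreeOff (Z : Set V) (F F' : Set (Sym2 V)) : Prop where
  reach_iff : ∀ ⦃x y⦄, x ∉ Z → y ∉ Z → (Reach F' x y ↔ Reach F x y)
  reach_eraseVert_iff : ∀ o ⦃x y⦄, x ∉ Z → y ∉ Z →
    (Reach (eraseVert F' o) x y ↔ Reach (eraseVert F o) x y)
  mem_iff : ∀ ⦃e : Sym2 V⦄, (∀ z ∈ e, z ∉ Z) → (e ∈ F' ↔ e ∈ F)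

namespace AgreeOff

variable {Z Z' : Set V} {F'' : Set (Sym2 V)}

protected theorem refl (Z : Set V) (F : Set (Sym2 V)) : AgreeOff Z F F :=
  ⟨fun _ _ _ _ => Iff.rfl, fun _ _ _ _ _ => Iff.rfl, fun _ _ => Iff.rfl⟩

protected theorem trans (h : AgreeOff Z F F') (h' : AgreeOff Z F' F'') : AgreeOff Z F F'' :=
  ⟨fun _ _ hx hy => (h'.reach_iff hx hy).trans (h.reach_iff hx hy),
    fun o _ _ hx hy => (h'.reach_eraseVert_iff o hx hy).trans (h.reach_eraseVert_iff o hx hy),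
    fun _ he => (h'.mem_iff he).trans (h.mem_iff he)⟩

theorem mono (hZ : Z ⊆ Z') (h : AgreeOff Z F F') : AgreeOff Z' F F' :=
  ⟨fun _ _ hx hy => h.reach_iff (fun h => hx (hZ h)) (fun h => hy (hZ h)),
    fun o _ _ hx hy => h.reach_eraseVert_iff o (fun h => hx (hZ h)) (fun h => hy (hZ h)),
    fun _ he => h.mem_iff fun z hz hzZ => he z hz (hZ hzZ)⟩

theorem subset {T : Set (Sym2 V)} (h : AgreeOff Z F F') (hTF : T ⊆ F)
    (hT : ∀ e ∈ T, ∀ z ∈ e, z ∉ Z) : T ⊆ F' :=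
  fun e he => (h.mem_iff (hT e he)).2 (hTF he)

end AgreeOff

theorem agreeOff_spin (hv : ∀ e ∈ F, v ∈ e → e = s(v, u)) : AgreeOff {v} F (spin F v u w) where
  reach_iff _ _ hx hy :=
    (reach_iff_of_eraseVert_eq hv (eq_of_mem_spin hv) eraseVert_spin.symm hx hy).symm
  reach_eraseVert_iff o _ _ hx hy := by
    refine (reach_iff_of_eraseVert_eq (fun e he => hv e he.1)
      (fun e he => eq_of_mem_spin hv e he.1) ?_ hx hy).symm
    rw [eraseVert_comm, eraseVert_comm (F := spin F v u w), eraseVert_spin]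
  mem_iff _ he := mem_spin_iff_of_notMem fun hv => he _ hv rfl

/-- The vertices hanging off `a` on the side away from `o`. -/
def behind (F : Set (Sym2 V)) (a o : V) : Set V :=
  {z | z ≠ a ∧ Reach (eraseVert F o) z a ∧ ¬ Reach (eraseVert F a) z o}

theorem left_notMem_behind : a ∉ behind F a o := fun h => h.1 rfl

theorem right_notMem_behind : o ∉ behind F a o := fun h => h.2.2 (Reach.refl _ _)

theorem notMem_behind_of_reach (h : Reach (eraseVert F a) x o) : x ∉ behind F a o :=
  fun hx => hx.2.2 h

theorem insert_behind_subset_behind (hp : p ∈ behind F a o) :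
    insert p (behind F p a) ⊆ behind F a o := by
  obtain ⟨hpa₀, hpa, hpo⟩ := hp
  rintro z (rfl | ⟨-, hzp, hza⟩)
  · exact ⟨hpa₀, hpa, hpo⟩
  have hzo : ¬ Reach (eraseVert F a) z o := fun h => hpo (hzp.symm.trans h)
  refine ⟨by rintro rfl; exact hza (Reach.refl _ _), ?_, hzo⟩
  have : Reach (eraseVert (eraseVert F a) o) z p := hzp.eraseVert_of_not_reach hzo
  exact (this.mono fun e he => show e ∈ eraseVert F o from ⟨he.1.1, he.2⟩).trans hpa

theorem ncard_behind_lt [Finite V] (hp : p ∈ behind F a o) :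
    (behind F p a).ncard < (behind F a o).ncard :=
  Set.ncard_lt_ncard ((Set.ssubset_insert left_notMem_behind).trans_subset
    (insert_behind_subset_behind hp))

theorem exists_isLeafAt_of_behind_eq_empty (hF : (fromEdgeSet F).IsAcyclic)
    (hnd : ∀ e ∈ F, ¬ e.IsDiag) (hao : a ≠ o) (h : Reach F a o) (hE : behind F a o = ∅) :
    ∃ u, IsLeafAt F a u := by
  have hne : ∀ ⦃z⦄, s(a, z) ∈ F → a ≠ z := fun z hz haz =>
    hnd _ hz (haz ▸ Sym2.mk_isDiag_iff.2 rfl)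
  have hreach : ∀ ⦃z⦄, s(a, z) ∈ F → Reach (eraseVert F a) z o := by
    intro z hz
    by_contra hzo
    have hzo' : z ≠ o := by rintro rfl; exact hzo (Reach.refl _ _)
    have : z ∈ behind F a o :=
      ⟨(hne hz).symm, (reach_of_mem (mem_eraseVert hz hao.symm hzo'.symm) (hne hz)).symm, hzo⟩
    simp [hE] at this
  obtain ⟨u, hu⟩ := h.exists_mem hao
  refine ⟨u, hu, hne hu, fun e he hae => ?_⟩
  obtain ⟨z, rfl⟩ := Sym2.mem_iff_exists.1 hae
  by_contra hzu
  -- two neighbours of `a` joined avoiding `a` would close a cycle through `a`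
  have hsub : eraseVert F a ⊆ F \ {s(a, u)} :=
    fun e he => ⟨he.1, fun heu => he.2 (heu ▸ Sym2.mem_mk_left _ _)⟩
  refine not_reach_sdiff_of_isAcyclic hF hu (hne hu) ?_
  exact (reach_of_mem (show s(a, z) ∈ F \ {s(a, u)} from ⟨he, hzu⟩) (hne he)).trans
    (((hreach he).trans (hreach hu).symm).mono hsub)

theorem AgreeOff.mem_behind_iff {Z : Set V} (hZ : AgreeOff Z F F') (ha : a ∉ Z) (ho : o ∉ Z)
    (hz : z ∉ Z) : z ∈ behind F' a o ↔ z ∈ behind F a o := by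
  simp only [behind, Set.mem_ofPred_eq, hZ.reach_eraseVert_iff _ hz ha,
    hZ.reach_eraseVert_iff _ hz ho]

theorem AgreeOff.behind_subset_of_isLeafAt (hZ : AgreeOff (behind F a o) F F')
    (hp : p ∈ behind F a o) (hq : q ∉ behind F a o) (hqa : q ≠ a) (hleaf : IsLeafAt F' p q) :
    behind F' a o ⊆ behind F a o \ {p} := by
  have hpa : p ≠ a := hp.1
  have hp' : p ∉ behind F' a o := by
    rintro ⟨-, hpa', hpo⟩
    by_cases hqo : Reach (eraseVert F a) q o
    · refine hpo ((reach_of_mem (mem_eraseVert hleaf.mem hpa.symm hqa.symm) hleaf.ne).trans ?_)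
      exact (hZ.reach_eraseVert_iff a hq right_notMem_behind).2 hqo
    · refine hq ⟨hqa, (hZ.reach_eraseVert_iff o hq left_notMem_behind).1 ?_, hqo⟩
      exact hpa'.of_forall_eq (fun e he => hleaf.eq_of_mem e he.1) hpa
  intro z hz
  have hzp : z ≠ p := by rintro rfl; exact hp' hz
  refine ⟨by_contra fun hzb => ?_, hzp⟩
  exact hzb ((hZ.mem_behind_iff left_notMem_behind right_notMem_behind hzb).1 hz)

end EdgeSets

section Walks

variable {V : Type*} {G : SimpleGraph V} {S T : Set V} {u v x y z : V}

def ReachWithin (G : SimpleGraph V) (S : Set V) (x y : V) : Prop :=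
  ∃ w : G.Walk x y, ∀ z ∈ w.support, z ∈ S

def PreconnectedOn (G : SimpleGraph V) (S : Set V) : Prop :=
  ∀ x ∈ S, ∀ y ∈ S, ReachWithin G S x y

namespace ReachWithin

protected theorem refl (hx : x ∈ S) : ReachWithin G S x x := ⟨.nil, by simpa using hx⟩

protected theorem symm (h : ReachWithin G S x y) : ReachWithin G S y x := by
  obtain ⟨w, hw⟩ := h
  exact ⟨w.reverse, fun z hz => hw z (by simpa using hz)⟩

protected theorem trans (h : ReachWithin G S x y) (h' : ReachWithin G S y z) :
    ReachWithin G S x z := by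
  obtain ⟨w, hw⟩ := h
  obtain ⟨w', hw'⟩ := h'
  refine ⟨w.append w', fun t ht => ?_⟩
  rcases (Walk.mem_support_append_iff w w').1 ht with ht | ht
  exacts [hw t ht, hw' t ht]

theorem mono (hST : S ⊆ T) (h : ReachWithin G S x y) : ReachWithin G T x y := by
  obtain ⟨w, hw⟩ := h
  exact ⟨w, fun z hz => hST (hw z hz)⟩

theorem mem_left (h : ReachWithin G S x y) : x ∈ S := by
  obtain ⟨w, hw⟩ := h
  exact hw x w.start_mem_support

theorem mem_right (h : ReachWithin G S x y) : y ∈ S := h.symm.mem_left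

theorem of_adj (hx : x ∈ S) (hy : y ∈ S) (h : G.Adj x y) : ReachWithin G S x y :=
  ⟨.cons h .nil, by simp [hx, hy]⟩

theorem exists_adj_boundary (h : ReachWithin G S x y) (hx : x ∈ T) (hy : y ∉ T) :
    ∃ c ∈ T, ∃ t ∈ S \ T, G.Adj c t := by
  obtain ⟨w, hw⟩ := h
  induction w with
  | nil => exact absurd hx hy
  | @cons x c y hadj w ih =>
    by_cases hc : c ∈ T
    · exact ih hc hy fun z hz => hw z (by simp [hz])
    · exact ⟨x, hx, c, ⟨hw c (by simp), hc⟩, hadj⟩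

end ReachWithin

theorem preconnectedOn_compl_singleton
    (h : ((⊤ : G.Subgraph).deleteVerts {v}).coe.Connected) : PreconnectedOn G {v}ᶜ := by
  intro x hx y hy
  obtain ⟨p⟩ := h.preconnected ⟨x, trivial, hx⟩ ⟨y, trivial, hy⟩
  refine ⟨p.map (Subgraph.hom _), fun z hz => ?_⟩
  obtain ⟨⟨z, hz'⟩, -, rfl⟩ := List.mem_map.1 ((Walk.support_map _ p) ▸ hz)
  exact hz'.2

theorem ReachWithin.diff_of_notMem (h : ReachWithin G S y u)
    (hy : y ∉ {x | ReachWithin G (S \ {u}) z x}) :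
    ReachWithin G (S \ {x | ReachWithin G (S \ {u}) z x}) y u := by
  obtain ⟨w, hw⟩ := h
  induction w with
  | nil => exact .refl ⟨hw _ (by simp), hy⟩
  | @cons y c u hadj w ih =>
    by_cases hyu : y = u
    · subst hyu
      exact .refl ⟨hw _ (by simp), hy⟩
    have hcS : c ∈ S := hw c (by simp)
    have hc : c ∉ {x | ReachWithin G (S \ {u}) z x} := by
      intro hc
      by_cases hcu : c = u
      · exact hc.mem_right.2 hcu
      · exact hy (hc.trans (.of_adj (S := S \ {u}) ⟨hcS, hcu⟩ ⟨hw y (by simp), hyu⟩ hadj.symm))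
    exact (ReachWithin.of_adj (S := S \ {x | ReachWithin G (S \ {u}) z x}) ⟨hw y (by simp), hy⟩
      ⟨hcS, hc⟩ hadj).trans (ih hc fun z hz => hw z (by simp [hz]))

theorem PreconnectedOn.exists_adj_compl_and_or_ssubset {q : V} (hS : PreconnectedOn G S)
    (h2 : PreconnectedOn G {u}ᶜ) (hu : u ∈ S) (hq : q ∉ S) (hz : z ∈ S \ {u}) :
    ∃ c ∈ S, (∃ t ∉ S, G.Adj c t) ∧ (PreconnectedOn G (S \ {c}) ∨
      ∃ z' ∈ S \ {c}, {x | ReachWithin G (S \ {c}) z' x} ⊂ {x | ReachWithin G (S \ {u}) z x}) := by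
  set C := {x | ReachWithin G (S \ {u}) z x}
  obtain ⟨c, hcC, t, ⟨htu, htC⟩, hct⟩ := (h2 z hz.2 q fun h => hq (h ▸ hu)).exists_adj_boundary
    (T := C) (.refl hz) fun h => hq h.mem_right.1
  have hc : c ∈ S \ {u} := hcC.mem_right
  have ht : t ∉ S := fun htS => htC (hcC.trans (.of_adj hc ⟨htS, htu⟩ hct))
  refine ⟨c, hc.1, ⟨t, ht, hct⟩, or_iff_not_imp_left.2 fun hnot => ?_⟩
  -- the pieces of `S \ {c}` not containing `u` lie inside `C \ {c}`
  have hout : ∀ y ∈ S \ {c}, y ∉ C → ReachWithin G (S \ {c}) y u := fun y hy hyC =>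
    ((hS y hy.1 u hu).diff_of_notMem hyC).mono
      (Set.sdiff_subset_sdiff_right (Set.singleton_subset_iff.2 hcC))
  obtain ⟨z', hz', hz'u⟩ : ∃ z' ∈ S \ {c}, ¬ ReachWithin G (S \ {c}) z' u := by
    by_contra! hall
    exact hnot fun x hx y hy => (hall x hx).trans (hall y hy).symm
  refine ⟨z', hz', lt_of_le_of_lt (b := C \ {c}) (fun y hy => ⟨?_, hy.mem_right.2⟩)
    (Set.sdiff_singleton_ssubset.2 hcC)⟩
  by_contra hyC
  exact hz'u (hy.trans (hout y hy.mem_right hyC))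

theorem PreconnectedOn.exists_preconnectedOn_diff_singleton [Finite V] (hG : G.Connected)
    (h2 : ∀ v, PreconnectedOn G {v}ᶜ) (hS : PreconnectedOn G S) (hne : S.Nonempty)
    (hco : Sᶜ.Nonempty) : ∃ u ∈ S, (∃ q ∉ S, G.Adj u q) ∧ PreconnectedOn G (S \ {u}) := by
  obtain ⟨q, hq⟩ := hco
  obtain ⟨s, hs⟩ := hne
  obtain ⟨u, hu, t, ⟨-, ht⟩, hut⟩ :=
    ReachWithin.exists_adj_boundary (S := Set.univ) ⟨(hG.preconnected s q).some, by simp⟩ hs hq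
  replace hut : ∃ t ∉ S, G.Adj u t := ⟨t, ht, hut⟩
  rcases (S \ {u}).eq_empty_or_nonempty with hE | ⟨z, hz⟩
  · exact ⟨u, hu, hut, by simp [hE, PreconnectedOn]⟩
  induction hn : {x | ReachWithin G (S \ {u}) z x}.ncard using Nat.strong_induction_on
    generalizing u z with
  | _ n ih =>
  obtain ⟨c, hc, hct, hpre | ⟨z', hz', hlt⟩⟩ := hS.exists_adj_compl_and_or_ssubset (h2 u) hu hq hz
  · exact ⟨c, hc, hct, hpre⟩
  · exact ih _ (hn ▸ Set.ncard_lt_ncard hlt) c hc hct z' hz' rfl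

end Walks

section AlmostTrees

open Relation

variable {V : Type*} [Fintype V] {G : SimpleGraph V} {F F' T : Set (Sym2 V)} {H : Set V}
  {a o q u v w : V}

theorem _root_.IsAlmostTree.nonDiag (hF : IsAlmostTree G F) : ∀ e ∈ F, ¬ e.IsDiag :=
  fun _ he => G.not_isDiag_of_mem_edgeSet (hF.1 he)

theorem _root_.IsAlmostTree.exists_not_reach (hF : IsAlmostTree G F) (x : V) :
    ∃ y, ¬ Reach F x y := by
  obtain ⟨a, b, hab, h⟩ := card_connectedComponent_eq_two_iff.1 hF.2.2
  rcases h x with hx | hx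
  · exact ⟨b, fun hb => hab (hx.symm.trans hb)⟩
  · exact ⟨a, fun ha => hab (ha.symm.trans hx)⟩

theorem _root_.IsAlmostTree.reach_or_reach (hF : IsAlmostTree G F) {x y : V} (hxy : ¬ Reach F x y)
    (z : V) : Reach F z x ∨ Reach F z y := by
  obtain ⟨a, b, -, h⟩ := card_connectedComponent_eq_two_iff.1 hF.2.2
  rcases h x with hx | hx <;> rcases h y with hy | hy <;> rcases h z with hz | hz <;>
    first
    | exact absurd (hx.trans hy.symm) hxy
    | exact Or.inl (hz.trans hx.symm)
    | exact Or.inr (hz.trans hy.symm)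

theorem isAlmostTree_spin (hF : IsAlmostTree G F) (h : IsLeafAt F v u) (hvw : G.Adj v w) :
    IsAlmostTree G (spin F v u w) := by
  have hv : ∀ e ∈ F \ {s(v, u)}, v ∉ e := fun e he hve => he.2 (h.eq_of_mem e he.1 hve)
  refine ⟨Set.insert_subset hvw (Set.sdiff_subset.trans hF.1), ?_, ?_⟩
  · have hnr : ¬ (fromEdgeSet (F \ {s(v, u)})).Reachable v w := fun h' =>
      hvw.ne (Reach.eq_of_forall_notMem hv h').symm
    rw [spin, Set.insert_eq, fromEdgeSet_union, sup_comm]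
    exact (hF.2.1.anti (fromEdgeSet_mono Set.sdiff_subset)).sup_edge_of_not_reachable hnr
  · -- `u` stays apart from a vertex `x` outside its component, and `v` now hangs at `w`
    obtain ⟨x, hx⟩ := hF.exists_not_reach u
    have hxv : x ≠ v := by rintro rfl; exact hx h.reach.symm
    have htr := (agreeOff_spin (w := w) h.eq_of_mem).reach_iff
    have hz : ∀ z, z ≠ v → Reach (spin F v u w) z u ∨ Reach (spin F v u w) z x := fun z hzv =>
      (hF.reach_or_reach hx z).imp (htr hzv h.ne.symm).2 (htr hzv hxv).2
    refine card_connectedComponent_eq_two_iff.2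
      ⟨u, x, fun h' => hx ((htr h.ne.symm hxv).1 h'), fun z => ?_⟩
    by_cases hzv : z = v
    · subst hzv
      have hvw' : Reach (spin F z u w) z w := reach_of_mem (Set.mem_insert _ _) hvw.ne
      exact (hz w hvw.ne.symm).imp hvw'.trans hvw'.trans
    · exact hz z hzv

theorem IsLeafAt.leafSpin (h : IsLeafAt F v u) (hF : F ⊆ G.edgeSet) (hvw : G.Adj v w)
    (hwu : w ≠ u) : LeafSpin G F (spin F v u w) :=
  ⟨s(v, u), s(v, w), v, h.mem, Sym2.mem_mk_left _ _,
    (card_neighborSet_eq_one_iff fun _ he => G.not_isDiag_of_mem_edgeSet (hF he)).2 ⟨u, h⟩,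
    Sym2.mem_mk_left _ _, hvw, h.notMem hwu, rfl⟩

theorem _root_.LeafSpin.symm (hF : F ⊆ G.edgeSet) (h : LeafSpin G F F') : LeafSpin G F' F := by
  obtain ⟨e, e', v, he, hve, hcard, hve', he'G, he'F, rfl⟩ := h
  obtain ⟨u, hu⟩ :=
    (card_neighborSet_eq_one_iff fun _ he => G.not_isDiag_of_mem_edgeSet (hF he)).1 hcard
  obtain rfl := hu.eq_of_mem e he hve
  obtain ⟨w, rfl⟩ := Sym2.mem_iff_exists.1 hve'
  have hwu : w ≠ u := by rintro rfl; exact he'F hu.mem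
  have hvw : G.Adj v w := he'G
  have := (isLeafAt_spin hu hvw.ne).leafSpin (Set.insert_subset hvw (Set.sdiff_subset.trans hF))
    (hF hu.mem) hwu.symm
  rwa [spin_spin hu hwu] at this

abbrev AlmostTree (G : SimpleGraph V) := {F : Set (Sym2 V) // IsAlmostTree G F}

def SpinAdj (G : SimpleGraph V) (A B : AlmostTree G) : Prop := LeafSpin G A.1 B.1

instance : Std.Symm (SpinAdj G) := ⟨fun A _ h => LeafSpin.symm A.2.1 h⟩

theorem IsLeafAt.exists_reflTransGen_isLeafAt (A : AlmostTree G) (h : IsLeafAt A.1 v u)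
    (hvw : G.Adj v w) :
    ∃ B, ReflTransGen (SpinAdj G) A B ∧ AgreeOff {v} A.1 B.1 ∧ IsLeafAt B.1 v w := by
  by_cases hwu : w = u
  · subst hwu
    exact ⟨A, .refl, .refl _ _, h⟩
  exact ⟨⟨_, isAlmostTree_spin A.2 h hvw⟩, .single (h.leafSpin A.2.1 hvw hwu),
    agreeOff_spin h.eq_of_mem, isLeafAt_spin h hvw.ne⟩

theorem exists_isLeafAt_of_exists_behind_eq_empty (A : AlmostTree G) (hao : a ≠ o)
    (h : Reach A.1 a o) (haw : G.Adj a w) (hclear : ∃ B, ReflTransGen (SpinAdj G) A B ∧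
      AgreeOff (behind A.1 a o) A.1 B.1 ∧ behind B.1 a o = ∅) :
    ∃ B, ReflTransGen (SpinAdj G) A B ∧ AgreeOff (insert a (behind A.1 a o)) A.1 B.1 ∧
      IsLeafAt B.1 a w := by
  obtain ⟨B₁, hAB₁, hZ₁, hE⟩ := hclear
  have h₁ : Reach B₁.1 a o := (hZ₁.reach_iff left_notMem_behind right_notMem_behind).2 h
  obtain ⟨u, hu⟩ := exists_isLeafAt_of_behind_eq_empty B₁.2.2.1 B₁.2.nonDiag hao h₁ hE
  obtain ⟨B₂, hB₁B₂, hZ₂, hleaf⟩ := hu.exists_reflTransGen_isLeafAt B₁ haw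
  exact ⟨B₂, hAB₁.trans hB₁B₂, (hZ₁.mono (Set.subset_insert _ _)).trans
    (hZ₂.mono (Set.singleton_subset_iff.2 (Set.mem_insert _ _))), hleaf⟩

theorem exists_reflTransGen_behind_eq_empty (h2 : ∀ v, PreconnectedOn G {v}ᶜ) (A : AlmostTree G)
    (hao : a ≠ o) :
    ∃ B, ReflTransGen (SpinAdj G) A B ∧ AgreeOff (behind A.1 a o) A.1 B.1 ∧
      behind B.1 a o = ∅ := by
  induction hn : (behind A.1 a o).ncard using Nat.strong_induction_on generalizing A a o with
  | _ n ih =>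
  rcases (behind A.1 a o).eq_empty_or_nonempty with hE | ⟨z, hz⟩
  · exact ⟨A, .refl, .refl _ _, hE⟩
  -- a walk from the zone to `o` avoiding `a` leaves the zone along an edge `pq` of `G`;
  -- clearing the zone behind `p` first makes `p` a leaf, which is then hung at `q`
  obtain ⟨p, hp, q, ⟨hqa, hq⟩, hpq⟩ :=
    (h2 a z hz.1 o hao.symm).exists_adj_boundary hz right_notMem_behind
  obtain ⟨B₁, hAB₁, hZ₁, hleaf⟩ := exists_isLeafAt_of_exists_behind_eq_empty A hp.1
    (hp.2.1.mono eraseVert_subset) hpq (ih _ (hn ▸ ncard_behind_lt hp) A hp.1 rfl)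
  replace hZ₁ := hZ₁.mono (insert_behind_subset_behind hp)
  have hsub := hZ₁.behind_subset_of_isLeafAt hp hq hqa hleaf
  obtain ⟨B₂, hB₁B₂, hZ₂, hE⟩ := ih _ (hn ▸ Set.ncard_lt_ncard
    (hsub.trans_ssubset (Set.sdiff_singleton_ssubset.2 hp))) B₁ hao rfl
  exact ⟨B₂, hAB₁.trans hB₁B₂, hZ₁.trans (hZ₂.mono (hsub.trans Set.sdiff_subset)), hE⟩

theorem exists_reflTransGen_isLeafAt_superset (h2 : ∀ v, PreconnectedOn G {v}ᶜ)
    (A : AlmostTree G) (hao : a ≠ o) (h : Reach A.1 a o) (haw : G.Adj a w) (hTA : T ⊆ A.1)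
    (hTH : ∀ e ∈ T, ∀ x ∈ e, x ∈ H) (ha : a ∉ H) (hH : ∀ x ∈ H, x ∉ behind A.1 a o) :
    ∃ B, ReflTransGen (SpinAdj G) A B ∧ AgreeOff (insert a (behind A.1 a o)) A.1 B.1 ∧
      IsLeafAt B.1 a w ∧ T ⊆ B.1 := by
  obtain ⟨B, hAB, hZ, hleaf⟩ :=
    exists_isLeafAt_of_exists_behind_eq_empty A hao h haw
      (exists_reflTransGen_behind_eq_empty h2 A hao)
  refine ⟨B, hAB, hZ, hleaf, hZ.subset hTA fun e he x hx hxZ => ?_⟩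
  rcases hxZ with rfl | hxZ
  exacts [ha (hTH e he _ hx), hH x (hTH e he x hx) hxZ]

theorem exists_reflTransGen_insert_subset (h2 : ∀ v, PreconnectedOn G {v}ᶜ) (A : AlmostTree G)
    (hTA : T ⊆ A.1) (hTH : ∀ e ∈ T, ∀ x ∈ e, x ∈ H) (hT : ∀ x ∈ H, ∀ y ∈ H, Reach T x y)
    (hu : u ∉ H) (hv : v ∈ H) (huv : G.Adj u v) (hq : q ∉ H) (hqu : q ≠ u) (huq : G.Adj u q) :
    ∃ B, ReflTransGen (SpinAdj G) A B ∧ insert s(u, v) T ⊆ B.1 := by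
  have hT' : ∀ {F : Set (Sym2 V)} {a : V}, T ⊆ F → a ∉ H → ∀ x ∈ H, x ∉ behind F a v :=
    fun hTF ha x hx => notMem_behind_of_reach ((hT x hx v hv).mono
      fun e he => ⟨hTF he, fun hae => ha (hTH e he _ hae)⟩)
  have hsep : ∀ {F : Set (Sym2 V)}, T ⊆ F → ¬ Reach F u v → ∀ x ∈ H, x ∉ behind F u q :=
    fun hTF huv' x hx hxb => huv'
      ((hxb.2.1.mono eraseVert_subset).symm.trans ((hT x hx v hv).mono hTF))
  by_cases huv' : Reach A.1 u v
  · obtain ⟨B, hAB, -, hleaf, hTB⟩ := exists_reflTransGen_isLeafAt_superset h2 A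
      (fun h : u = v => hu (h ▸ hv)) huv' huv hTA hTH hu (hT' hTA hu)
    exact ⟨B, hAB, Set.insert_subset hleaf.mem hTB⟩
  by_cases hqv : Reach A.1 q v
  · -- hang `q` at `u` first, so that `u` and `q` share a component not containing `v`
    have hqv' : q ≠ v := fun h => hq (h ▸ hv)
    obtain ⟨B, hAB, hZ, hqleaf, hTB⟩ := exists_reflTransGen_isLeafAt_superset h2 A hqv' hqv
      huq.symm hTA hTH hq (hT' hTA hq)
    have huZ : u ∉ insert q (behind A.1 q v) := by
      rintro (rfl | hub)
      · exact hqu rfl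
      · exact huv' ((hub.2.1.mono eraseVert_subset).trans hqv)
    have hvZ : v ∉ insert q (behind A.1 q v) := by
      rintro (rfl | hvb)
      exacts [hqv' rfl, right_notMem_behind hvb]
    have huvB : ¬ Reach B.1 u v := fun h => huv' ((hZ.reach_iff huZ hvZ).1 h)
    obtain ⟨C, hBC, -, hleaf, hTC⟩ := exists_reflTransGen_isLeafAt_superset h2 B hqu.symm
      hqleaf.reach.symm huv hTB hTH hu (hsep hTB huvB)
    exact ⟨C, hAB.trans hBC, Set.insert_subset hleaf.mem hTC⟩
  · have huq' : Reach A.1 u q := ((A.2.reach_or_reach huv' q).resolve_right hqv).symm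
    obtain ⟨B, hAB, -, hleaf, hTB⟩ := exists_reflTransGen_isLeafAt_superset h2 A hqu.symm huq'
      huv hTA hTH hu (hsep hTA huv')
    exact ⟨B, hAB, Set.insert_subset hleaf.mem hTB⟩

theorem exists_forall_reflTransGen_superset (hG : G.Connected) (h2 : ∀ v, PreconnectedOn G {v}ᶜ)
    (hH : PreconnectedOn G H) (hne : H.Nonempty) (hco : Hᶜ.Nonempty) :
    ∃ T : Set (Sym2 V), (∀ e ∈ T, ∀ x ∈ e, x ∈ H) ∧ (∀ x ∈ H, ∀ y ∈ H, Reach T x y) ∧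
      ∀ A : AlmostTree G, ∃ B, ReflTransGen (SpinAdj G) A B ∧ T ⊆ B.1 := by
  induction hn : H.ncard generalizing H with
  | zero => exact absurd hn ((Set.ncard_pos).2 hne).ne'
  | succ n ih =>
  obtain ⟨u, hu, ⟨q, hq, huq⟩, hH'⟩ := hH.exists_preconnectedOn_diff_singleton hG h2 hne hco
  rcases (H \ {u}).eq_empty_or_nonempty with hE | ⟨y, hy⟩
  · have hHu : ∀ x ∈ H, x = u := fun x hx => by_contra fun hxu => hE.subset ⟨hx, hxu⟩
    refine ⟨∅, by simp, fun x hx y hy => ?_, fun A => ⟨A, .refl, Set.empty_subset _⟩⟩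
    rw [hHu x hx, hHu y hy]
    exact Reach.refl _ _
  obtain ⟨T, hTH, hT, hspin⟩ :=
    ih hH' ⟨y, hy⟩ (hco.mono (Set.compl_subset_compl.2 Set.sdiff_subset))
    (by rw [Set.ncard_sdiff_singleton_of_mem hu, hn, Nat.add_sub_cancel])
  obtain ⟨c, hc, v, ⟨hvH, hvu⟩, huv⟩ :=
    (hH u hu y hy.1).exists_adj_boundary (Set.mem_singleton u) hy.2
  rw [Set.mem_singleton_iff] at hc
  subst hc
  refine ⟨insert s(c, v) T, ?_, ?_, fun A => ?_⟩
  · rintro e (rfl | he) x hx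
    · rcases Sym2.mem_iff.1 hx with rfl | rfl
      exacts [hu, hvH]
    · exact (hTH e he x hx).1
  · have hxc : ∀ x ∈ H, Reach (insert s(c, v) T) x c := by
      intro x hx
      by_cases hxc : x = c
      · exact hxc ▸ Reach.refl _ _
      exact ((hT x ⟨hx, hxc⟩ v ⟨hvH, hvu⟩).mono (Set.subset_insert _ _)).trans
        (reach_of_mem (Set.mem_insert _ _) huv.ne).symm
    exact fun x hx y hy => (hxc x hx).trans (hxc y hy).symm
  · obtain ⟨B, hAB, hTB⟩ := hspin A
    obtain ⟨C, hBC, hC⟩ := exists_reflTransGen_insert_subset h2 B hTB hTH hT (fun h => h.2 rfl)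
      ⟨hvH, hvu⟩ huv (fun h => hq h.1) (fun h => hq (h ▸ hu)) huq
    exact ⟨C, hAB.trans hBC, hC⟩

theorem _root_.IsAlmostTree.eq_of_subset (hF : IsAlmostTree G F) (hTF : T ⊆ F) {r : V}
    (hT : ∀ x ∈ ({r}ᶜ : Set V), ∀ y ∈ ({r}ᶜ : Set V), Reach T x y) : F = T := by
  refine Set.Subset.antisymm (fun e he => by_contra fun heT => ?_) hTF
  by_cases hr : r ∈ e
  · -- an edge at `r` would join everything to `r`
    obtain ⟨z, rfl⟩ := Sym2.mem_iff_exists.1 hr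
    have hzr : z ≠ r := (G.ne_of_adj (hF.1 he)).symm
    obtain ⟨x, hx⟩ := hF.exists_not_reach r
    by_cases hxr : x = r
    · exact hx (hxr ▸ Reach.refl _ _)
    · exact hx ((reach_of_mem he hzr.symm).trans ((hT z hzr x hxr).mono hTF))
  · induction e using Sym2.ind with | h x y => ?_
    have hxy : x ≠ y := G.ne_of_adj (hF.1 he)
    refine not_reach_sdiff_of_isAcyclic hF.2.1 he hxy ((hT x ?_ y ?_).mono fun f hf =>
      ⟨hTF hf, fun (hfe : f = s(x, y)) => heT (hfe ▸ hf)⟩)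
    exacts [fun h => hr (h ▸ Sym2.mem_mk_left _ _), fun h => hr (h ▸ Sym2.mem_mk_right _ _)]

end AlmostTrees

end AlmostTreeSpin

open AlmostTreeSpin

/-- For a finite `2`-connected plane graph `G`, the graph whose
vertices are the spanning almost-trees of `G` and whose edges are leaf spins is
connected. -/
theorem stmt12 {V : Type*} [Fintype V] (G : SimpleGraph V) (hconn : G.Connected)
    (h2conn : ∀ v : V, (((⊤ : G.Subgraph).deleteVerts {v}).coe).Connected)
    (F₁ F₂ : {F : Set (Sym2 V) // IsAlmostTree G F}) :
    Relation.ReflTransGen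
      (fun A B : {F : Set (Sym2 V) // IsAlmostTree G F} => LeafSpin G A.1 B.1)
      F₁ F₂ := by
  have h2 : ∀ v, PreconnectedOn G {v}ᶜ := fun v => preconnectedOn_compl_singleton (h2conn v)
  obtain ⟨a, b, hab, -⟩ := card_connectedComponent_eq_two_iff.1 F₁.2.2.2
  have hba : b ∈ ({a}ᶜ : Set V) := by rintro rfl; exact hab (Reach.refl _ _)
  obtain ⟨T, -, hT, hspin⟩ := exists_forall_reflTransGen_superset hconn h2 (h2 a) ⟨b, hba⟩
    ⟨a, by simp⟩
  obtain ⟨B₁, h₁, hB₁⟩ := hspin F₁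
  obtain ⟨B₂, h₂, hB₂⟩ := hspin F₂
  obtain rfl : B₁ = B₂ :=
    Subtype.ext ((B₁.2.eq_of_subset hB₁ hT).trans (B₂.2.eq_of_subset hB₂ hT).symm)
  exact h₁.trans (Std.Symm.symm _ _ h₂)
end

section
/- Let $x$ be a perfect matching on the overlaid Tait graph $\Gamma(D)$ of a knot projection $D$ that is admissible (leaves exactly one black and one white region unmatched; all crossings matched). Let $H_x^b \subseteq G_b$ and $H_x^w \subseteq G_w$ be the induced black and white subgraphs (an edge of $G_b$ is included iff its crossing is matched with one of its black endpoints, similarly for $G_w$). Then every connected component of $H_x^b$ and of $H_x^w$ is either a tree or has first Betti number exactly $1$ (homotopy type of a circle), and there is exactly one tree component of each colour. -/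
/-! The regions matched along the edges of a component `K` are exactly the vertices of `K`
other than the unmatched region of that colour, and the matching is injective, so
`#E(K) = #V(K) - 1` if the unmatched region lies in `K` and `#E(K) = #V(K)` otherwise. Hence
every component has Betti number `0` or `1`, and the trees are exactly the component of the
unmatched region. The white case is the black case for the colour-swapped matching. -/

section Tait

variable {B W C : Type*}

/-- Connectivity in the black graph through the edges (crossings) in `S`. -/
def reachB (bE : C → Sym2 B) (S : Set C) : B → B → Prop :=
  Relation.ReflTransGen (fun u v => ∃ c ∈ S, bE c = s(u, v))

/-- Connectivity in the white graph through the edges (crossings) in `S`. -/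
def reachW (wE : C → Sym2 W) (S : Set C) : W → W → Prop :=
  Relation.ReflTransGen (fun u v => ∃ c ∈ S, wE c = s(u, v))

/-- Black edges induced by a perfect matching: crossings matched with a black region. -/
def blackSetT (x : C → B ⊕ W) : Set C := {c | ∃ b, x c = Sum.inl b}

/-- White edges induced by a perfect matching. -/
def whiteSetT (x : C → B ⊕ W) : Set C := {c | ∃ w, x c = Sum.inr w}

/-- Vertex set of the connected component of `b` in the induced black subgraph. -/
def compVB (bE : C → Sym2 B) (x : C → B ⊕ W) (b : B) : Set B :=
  {b' | reachB bE (blackSetT x) b b'}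

/-- Edge set of the connected component of `b` in the induced black subgraph. -/
def compEB (bE : C → Sym2 B) (x : C → B ⊕ W) (b : B) : Set C :=
  {c | c ∈ blackSetT x ∧ ∃ b1, b1 ∈ bE c ∧ reachB bE (blackSetT x) b b1}

/-- Vertex set of the connected component of `w` in the induced white subgraph. -/
def compVW (wE : C → Sym2 W) (x : C → B ⊕ W) (w : W) : Set W :=
  {w' | reachW wE (whiteSetT x) w w'}

/-- Edge set of the connected component of `w` in the induced white subgraph. -/
def compEW (wE : C → Sym2 W) (x : C → B ⊕ W) (w : W) : Set C :=
  {c | c ∈ whiteSetT x ∧ ∃ w1, w1 ∈ wE c ∧ reachW wE (whiteSetT x) w w1}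

/-- The component of `b` is a tree: one more vertex than edges. -/
def IsTreeCompB (bE : C → Sym2 B) (x : C → B ⊕ W) (b : B) : Prop :=
  Nat.card (compEB bE x b) + 1 = Nat.card (compVB bE x b)

/-- The component of `w` is a tree. -/
def IsTreeCompW (wE : C → Sym2 W) (x : C → B ⊕ W) (w : W) : Prop :=
  Nat.card (compEW wE x w) + 1 = Nat.card (compVW wE x w)

end Tait

section Components

variable {V C : Type*} {E : C → Sym2 V} {S : Set C}

theorem reachB_symm {u v : V} (h : reachB E S u v) : reachB E S v u :=
  have : Std.Symm fun u v => ∃ c ∈ S, E c = s(u, v) :=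
    ⟨fun _ _ ⟨c, hc, h⟩ => ⟨c, hc, h.trans Sym2.eq_swap⟩⟩
  Relation.ReflTransGen.stdSymm.symm _ _ h

theorem reachB_of_mem_of_mem {c : C} {v v₁ u : V} (hc : c ∈ S) (hv₁ : v₁ ∈ E c) (hu : u ∈ E c)
    (h : reachB E S v v₁) : reachB E S v u := by
  by_cases hne : v₁ = u
  · exact hne ▸ h
  · exact h.tail ⟨c, hc, (Sym2.mem_and_mem_iff hne).mp ⟨hv₁, hu⟩⟩

variable {m : C → V} {r : V}

theorem image_edges_eq_sdiff_root (hm : Set.BijOn m S {r}ᶜ) (hmE : ∀ c ∈ S, m c ∈ E c)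
    (v : V) :
    m '' {c | c ∈ S ∧ ∃ v₁, v₁ ∈ E c ∧ reachB E S v v₁} = {u | reachB E S v u} \ {r} := by
  ext u
  constructor
  · rintro ⟨c, ⟨hc, v₁, hv₁, hreach⟩, rfl⟩
    exact ⟨reachB_of_mem_of_mem hc hv₁ (hmE c hc) hreach, hm.mapsTo hc⟩
  · rintro ⟨hreach, hur⟩
    obtain ⟨c, hc, rfl⟩ := hm.surjOn hur
    exact ⟨c, ⟨hc, m c, hmE c hc, hreach⟩, rfl⟩

theorem card_edges_eq_ncard_sdiff_root (hm : Set.BijOn m S {r}ᶜ)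
    (hmE : ∀ c ∈ S, m c ∈ E c) (v : V) :
    Nat.card {c | c ∈ S ∧ ∃ v₁, v₁ ∈ E c ∧ reachB E S v v₁} =
      ({u | reachB E S v u} \ {r}).ncard := by
  rw [Nat.card_coe_set_eq, ← image_edges_eq_sdiff_root hm hmE v,
    (hm.injOn.mono fun _ hc => hc.1).ncard_image]

theorem card_edges_add_one_of_reachB [Finite V] (hm : Set.BijOn m S {r}ᶜ)
    (hmE : ∀ c ∈ S, m c ∈ E c) {v : V} (h : reachB E S v r) :
    Nat.card {c | c ∈ S ∧ ∃ v₁, v₁ ∈ E c ∧ reachB E S v v₁} + 1 =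
      Nat.card {u | reachB E S v u} := by
  rw [card_edges_eq_ncard_sdiff_root hm hmE, Nat.card_coe_set_eq]
  exact Set.ncard_sdiff_singleton_add_one h (Set.toFinite _)

theorem card_edges_of_not_reachB (hm : Set.BijOn m S {r}ᶜ)
    (hmE : ∀ c ∈ S, m c ∈ E c) {v : V} (h : ¬ reachB E S v r) :
    Nat.card {c | c ∈ S ∧ ∃ v₁, v₁ ∈ E c ∧ reachB E S v v₁} =
      Nat.card {u | reachB E S v u} := by
  rw [card_edges_eq_ncard_sdiff_root hm hmE, Nat.card_coe_set_eq,
    Set.sdiff_singleton_eq_self (s := {u | reachB E S v u}) h]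

end Components

section Matching

variable {B W C : Type*}

def matchedBlack (x : C → B ⊕ W) (b₀ : B) (c : C) : B :=
  (x c).elim id fun _ => b₀

theorem eq_inl_matchedBlack {x : C → B ⊕ W} {c : C} (hc : c ∈ blackSetT x) (b₀ : B) :
    x c = Sum.inl (matchedBlack x b₀ c) := by
  obtain ⟨b, hb⟩ := hc
  simp [matchedBlack, hb]

theorem bijOn_matchedBlack {x : C → B ⊕ W} (hinj : Function.Injective x) {b₀ : B}
    (hb₀ : ∀ c, x c ≠ Sum.inl b₀) (huniq : ∀ b, (∀ c, x c ≠ Sum.inl b) → b = b₀) :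
    Set.BijOn (matchedBlack x b₀) (blackSetT x) {b₀}ᶜ := by
  refine ⟨fun c hc hcb₀ => hb₀ c ?_, fun c hc c' hc' h => hinj ?_, fun b hb => ?_⟩
  · rw [eq_inl_matchedBlack hc b₀, hcb₀]
  · rw [eq_inl_matchedBlack hc b₀, eq_inl_matchedBlack hc' b₀, h]
  · obtain ⟨c, hc⟩ : ∃ c, x c = Sum.inl b := by
      by_contra! h
      exact hb (huniq b h)
    exact ⟨c, ⟨b, hc⟩, by simp [matchedBlack, hc]⟩

theorem black_components_tree_or_unicyclic [Finite B] (bE : C → Sym2 B) (x : C → B ⊕ W)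
    (hinj : Function.Injective x) (hincB : ∀ c b, x c = Sum.inl b → b ∈ bE c)
    (hadmB : ∃! b : B, ∀ c, x c ≠ Sum.inl b) :
    (∀ b : B, IsTreeCompB bE x b ∨ Nat.card (compEB bE x b) = Nat.card (compVB bE x b)) ∧
    ∃ b₀ : B, IsTreeCompB bE x b₀ ∧
      ∀ b : B, IsTreeCompB bE x b → reachB bE (blackSetT x) b₀ b := by
  obtain ⟨b₀, hb₀, huniq⟩ := hadmB
  have hm := bijOn_matchedBlack hinj hb₀ huniq
  have hmE c (hc : c ∈ blackSetT x) : matchedBlack x b₀ c ∈ bE c :=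
    hincB c _ (eq_inl_matchedBlack hc b₀)
  have htree_of_reach {b} (h : reachB bE (blackSetT x) b b₀) : IsTreeCompB bE x b :=
    card_edges_add_one_of_reachB hm hmE h
  have hcard_of_not_reach {b} (h : ¬ reachB bE (blackSetT x) b b₀) :
      Nat.card (compEB bE x b) = Nat.card (compVB bE x b) :=
    card_edges_of_not_reachB hm hmE h
  refine ⟨fun b => ?_, b₀, htree_of_reach .refl, fun b hb => ?_⟩
  · by_cases h : reachB bE (blackSetT x) b b₀
    exacts [.inl (htree_of_reach h), .inr (hcard_of_not_reach h)]
  · by_contra h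
    have := hcard_of_not_reach (mt reachB_symm h)
    unfold IsTreeCompB at hb
    omega

theorem swap_eq_inl_iff {a : B ⊕ W} {w : W} : a.swap = Sum.inl w ↔ a = Sum.inr w := by
  cases a <;> simp

theorem whiteSetT_eq_blackSetT_swap (x : C → B ⊕ W) :
    whiteSetT x = blackSetT (Sum.swap ∘ x) := by
  ext c
  simp [whiteSetT, blackSetT, swap_eq_inl_iff]

end Matching

theorem stmt15_general {B W C : Type*} [Fintype B] [Fintype W]
    (bE : C → Sym2 B) (wE : C → Sym2 W) (x : C → B ⊕ W)
    (hinj : Function.Injective x)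
    (hincB : ∀ c b, x c = Sum.inl b → b ∈ bE c)
    (hincW : ∀ c w, x c = Sum.inr w → w ∈ wE c)
    (hadmB : ∃! b : B, ∀ c, x c ≠ Sum.inl b)
    (hadmW : ∃! w : W, ∀ c, x c ≠ Sum.inr w) :
    (∀ b : B, IsTreeCompB bE x b ∨
        Nat.card (compEB bE x b) = Nat.card (compVB bE x b)) ∧
    (∀ w : W, IsTreeCompW wE x w ∨
        Nat.card (compEW wE x w) = Nat.card (compVW wE x w)) ∧
    (∃ b₀ : B, IsTreeCompB bE x b₀ ∧
        ∀ b : B, IsTreeCompB bE x b → reachB bE (blackSetT x) b₀ b) ∧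
    (∃ w₀ : W, IsTreeCompW wE x w₀ ∧
        ∀ w : W, IsTreeCompW wE x w → reachW wE (whiteSetT x) w₀ w) := by
  obtain ⟨hB, hB₀⟩ := black_components_tree_or_unicyclic bE x hinj hincB hadmB
  obtain ⟨hW, hW₀⟩ := black_components_tree_or_unicyclic wE (Sum.swap ∘ x)
    (Sum.swap_leftInverse.injective.comp hinj) (fun c w h => hincW c w (swap_eq_inl_iff.mp h))
    (by simpa only [Function.comp_apply, ne_eq, swap_eq_inl_iff] using hadmW)
  simp only [IsTreeCompW, compEW, compVW, reachW, whiteSetT_eq_blackSetT_swap]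
  exact ⟨hB, hW, hB₀, hW₀⟩

/-- For a perfect admissible matching `x` on the overlaid Tait graph
(every crossing matched injectively to an incident region, exactly one unmatched region
of each colour), every connected component of the induced black and white subgraphs is
either a tree (`#edges + 1 = #vertices`) or has first Betti number exactly one
(`#edges = #vertices`, the homotopy type of a circle), and there is exactly one tree
component of each colour. -/
theorem stmt15 {B W C : Type*} [Fintype B] [Fintype W] [Fintype C]
    (bE : C → Sym2 B) (wE : C → Sym2 W) (x : C → B ⊕ W)
    (hinj : Function.Injective x)
    (hincB : ∀ c b, x c = Sum.inl b → b ∈ bE c)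
    (hincW : ∀ c w, x c = Sum.inr w → w ∈ wE c)
    (hadmB : ∃! b : B, ∀ c, x c ≠ Sum.inl b)
    (hadmW : ∃! w : W, ∀ c, x c ≠ Sum.inr w) :
    (∀ b : B, IsTreeCompB bE x b ∨
        Nat.card (compEB bE x b) = Nat.card (compVB bE x b)) ∧
    (∀ w : W, IsTreeCompW wE x w ∨
        Nat.card (compEW wE x w) = Nat.card (compVW wE x w)) ∧
    (∃ b₀ : B, IsTreeCompB bE x b₀ ∧
        ∀ b : B, IsTreeCompB bE x b → reachB bE (blackSetT x) b₀ b) ∧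
    (∃ w₀ : W, IsTreeCompW wE x w₀ ∧
        ∀ w : W, IsTreeCompW wE x w → reachW wE (whiteSetT x) w₀ w) :=
  stmt15_general bE wE x hinj hincB hincW hadmB hadmW
end

section
/- Let $x$ be a perfect admissible matching on the overlaid Tait graph $\Gamma(D)$ of a knot projection, and let $x'$ be obtained from $x$ by a single clock move (exchanging the matched regions of two crossings incident to a common square face, rotating the two state components around the face). Then $|J(x')| - |J(x)| \in \{-2, 0, 2\}$, where $|J(\cdot)|$ is the number of components of the Jordan resolution. -/
section Ends

variable {C : Type*}

/-- The ends of the arcs of a knot projection: four ends around each crossing, in cyclic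
order.  The quadrant `i` at a crossing lies between the ends `i` and `i + 1`. -/
abbrev Ends (C : Type*) := C × Fin 4

/-- The smoothing of the diagram determined by a state `x` assigning to each crossing the
quadrant containing its dot: at the crossing `c` the ends `x c` and `x c + 1` (bounding
the dotted quadrant) are joined, as are the ends `x c + 2` and `x c + 3`. -/
def quadSmooth (x : C → Fin 4) : Ends C → Ends C := fun e =>
  if e.2 = x e.1 then (e.1, x e.1 + 1)
  else if e.2 = x e.1 + 1 then (e.1, x e.1)
  else if e.2 = x e.1 + 2 then (e.1, x e.1 + 3)
  else (e.1, x e.1 + 2)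

/-- The number of components of the Jordan resolution of the state `x`, for the diagram
whose arcs are given by the fixed-point-free involution `α` on ends: components are the
equivalence classes of ends under travelling along arcs (`α`) and along the smoothing
(`quadSmooth x`). -/
noncomputable def Jcount (α : Ends C → Ends C) (x : C → Fin 4) : ℕ :=
  Nat.card (Quot (fun a b : Ends C => α a = b ∨ quadSmooth x a = b))

/-- Walking around a face: the quadrant `(c, i)` continues, across the arc leaving the
end `(c, i + 1)`, into the quadrant of the same index at the other end of that arc. -/
def faceStep (α : Ends C → Ends C) (q : Ends C) : Ends C := α (q.1, q.2 + 1)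

/-- The regions of the diagram: quadrants up to the face-walking relation. -/
def RegionT (α : Ends C → Ends C) :=
  Quot (fun q q' : Ends C => faceStep α q = q')

/-- The region containing a quadrant. -/
def regionOf (α : Ends C → Ends C) (q : Ends C) : RegionT α := Quot.mk _ q

/-- Black regions: those containing an even quadrant (chequerboard colouring). -/
def IsBlackR (α : Ends C → Ends C) (r : RegionT α) : Prop :=
  ∃ q : Ends C, (q.2 : ℕ) % 2 = 0 ∧ regionOf α q = r

/-- White regions: those containing an odd quadrant. -/
def IsWhiteR (α : Ends C → Ends C) (r : RegionT α) : Prop :=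
  ∃ q : Ends C, (q.2 : ℕ) % 2 = 1 ∧ regionOf α q = r

/-- The perfect matching `x` is admissible: exactly one unmatched black region and
exactly one unmatched white region. -/
def AdmissibleE (α : Ends C → Ends C) (x : C → Fin 4) : Prop :=
  Nat.card {r : RegionT α // IsBlackR α r ∧ ∀ c, regionOf α (c, x c) ≠ r} = 1 ∧
  Nat.card {r : RegionT α // IsWhiteR α r ∧ ∀ c, regionOf α (c, x c) ≠ r} = 1

/-- `S` is the set of crossings of a black monochromatic loop supported by `x`:
a cyclic alternating sequence of crossings `c i` and black regions `r i`, where `r i` and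
`r (i+1)` are the two black regions at `c i` and `x` matches `c i` with `r i`. -/
def IsBlackLoopSet (α : Ends C → Ends C) (x : C → Fin 4) (S : Set C) : Prop :=
  ∃ (k : ℕ) (c : Fin (k + 1) → C) (r : Fin (k + 1) → RegionT α),
    Function.Injective c ∧ Function.Injective r ∧ S = Set.range c ∧
    ∀ i, r i = regionOf α (c i, x (c i)) ∧ ((x (c i) : ℕ) % 2 = 0) ∧
      ({regionOf α (c i, (0 : Fin 4)), regionOf α (c i, (2 : Fin 4))} :
        Set (RegionT α)) = {r i, r (i + 1)}

/-- `S` is the set of crossings of a white monochromatic loop supported by `x`. -/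
def IsWhiteLoopSet (α : Ends C → Ends C) (x : C → Fin 4) (S : Set C) : Prop :=
  ∃ (k : ℕ) (c : Fin (k + 1) → C) (r : Fin (k + 1) → RegionT α),
    Function.Injective c ∧ Function.Injective r ∧ S = Set.range c ∧
    ∀ i, r i = regionOf α (c i, x (c i)) ∧ ((x (c i) : ℕ) % 2 = 1) ∧
      ({regionOf α (c i, (1 : Fin 4)), regionOf α (c i, (3 : Fin 4))} :
        Set (RegionT α)) = {r i, r (i + 1)}

/-- `S` is the crossing set of a monochromatic loop supported by `x`. -/
def IsMonoLoopSet (α : Ends C → Ends C) (x : C → Fin 4) (S : Set C) : Prop :=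
  IsBlackLoopSet α x S ∨ IsWhiteLoopSet α x S

end Ends

/-!
Rotating the dot at a single crossing changes `|J|` by exactly one, and a clock move is two
such rotations at distinct crossings.

At most one: both resolutions are coarsened by their union, which is obtained from either of
them by gluing the four ends at the rotated crossing, i.e. by adding a single relation.

Not zero: every arc and every smoothing joins an even end to an odd one, so the components of
a resolution are the cycles of the return map "smoothing, then arc" on the even ends. A
rotation composes this map with the transposition of the two even ends at the crossing, which
changes its sign, hence the parity of its number of cycles.
-/

open Function Relation Equiv Equiv.Perm Finset

section QuotCard

variable {β : Type*} [Finite β]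

theorem card_quot_le_of_le {r s : β → β → Prop} (h : ∀ a b, r a b → s a b) :
    Nat.card (Quot s) ≤ Nat.card (Quot r) :=
  Nat.card_le_card_of_surjective (Quot.map id h) (Quot.ind fun a => ⟨Quot.mk r a, rfl⟩)

theorem card_quot_le_card_quot_add_one {r s : β → β → Prop} (p q : β)
    (h : ∀ a b, s a b → EqvGen (fun a b => r a b ∨ a = p ∧ b = q) a b) :
    Nat.card (Quot r) ≤ Nat.card (Quot s) + 1 := by
  classical
  let merge : Quot r → Quot r := fun z => if z = Quot.mk r q then Quot.mk r p else z
  have merge_mk : ∀ a b, s a b → merge (Quot.mk r a) = merge (Quot.mk r b) := by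
    intro a b hab
    let merge' : Quot (fun a b => r a b ∨ a = p ∧ b = q) → Quot r :=
      Quot.lift (merge ∘ Quot.mk r) <| by
        rintro a b (hab | ⟨rfl, rfl⟩)
        · simp only [comp_apply, Quot.sound hab]
        · simp only [comp_apply, merge]; split_ifs <;> simp_all
    exact congrArg merge' (Quot.eqvGen_sound (h a b hab))
  let f : Option (Quot s) → Quot r := fun o =>
    o.elim (Quot.mk r q) (Quot.lift (merge ∘ Quot.mk r) merge_mk)
  have hf : Surjective f := by
    intro z
    by_cases hz : z = Quot.mk r q
    · exact ⟨none, hz.symm⟩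
    · induction z using Quot.ind with
      | mk a => exact ⟨some (Quot.mk s a), if_neg hz⟩
  calc Nat.card (Quot r) ≤ Nat.card (Option (Quot s)) := Nat.card_le_card_of_surjective f hf
    _ = Nat.card (Quot s) + 1 := Finite.card_option

end QuotCard

section SameCycle

variable {β : Type*} [Fintype β] [DecidableEq β]

theorem card_quot_sameCycle (g : Perm β) :
    Nat.card (Quot g.SameCycle) = Fintype.card (fixedPoints g) + #g.cycleFactorsFinset := by
  let F : β → fixedPoints g ⊕ g.cycleFactorsFinset := fun x =>
    if hx : x ∈ g.support then .inr ⟨g.cycleOf x, cycleOf_mem_cycleFactorsFinset_iff.2 hx⟩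
    else .inl ⟨x, notMem_support.1 hx⟩
  have hF : ∀ x y, g.SameCycle x y ↔ F x = F y := by
    intro x y
    by_cases hx : x ∈ g.support <;> by_cases hy : y ∈ g.support <;>
      simp only [F, hx, hy, dif_pos, dif_neg, not_false_eq_true, Sum.inr.injEq, Sum.inl.injEq,
        reduceCtorEq, iff_false, Subtype.mk.injEq]
    · exact sameCycle_iff_cycleOf_eq_of_mem_support hx hy
    · exact fun h => hy (h.mem_support_iff.1 hx)
    · exact fun h => hx (h.mem_support_iff.2 hy)
    · exact ⟨fun h => Subtype.ext (h.eq_of_left (notMem_support.1 hx)),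
        fun h => Subtype.mk.inj h ▸ SameCycle.refl _ _⟩
  have hbij : Bijective (Quot.lift F fun x y h => (hF x y).1 h) := by
    refine ⟨fun a b => Quot.induction_on₂ a b fun x y h => Quot.sound ((hF x y).2 h), ?_⟩
    rintro (⟨x, hx⟩ | ⟨c, hc⟩)
    · exact ⟨Quot.mk _ x, dif_neg (notMem_support.2 hx)⟩
    · obtain ⟨x, hx⟩ := (mem_cycleFactorsFinset_iff.1 hc).1.nonempty_support
      refine ⟨Quot.mk _ x, ?_⟩
      have hxg := mem_cycleFactorsFinset_support_le hc hx
      simp only [F, dif_pos hxg, (cycle_is_cycleOf hx hc).symm]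
  rw [Nat.card_eq_of_bijective _ hbij, Nat.card_sum, Nat.card_eq_fintype_card,
    Nat.card_eq_fintype_card, Fintype.card_coe]

theorem neg_one_pow_card_quot_sameCycle (g : Perm β) :
    (-1 : ℤˣ) ^ Nat.card (Quot g.SameCycle) = sign g * (-1) ^ Fintype.card β := by
  obtain ⟨n, hn⟩ := Nat.exists_eq_add_of_le (sum_cycleType_le g)
  have hk : #g.cycleFactorsFinset = g.cycleType.card := by
    rw [cycleType_def, Multiset.card_map]; rfl
  rw [card_quot_sameCycle, card_fixedPoints, hk, sign_of_cycleType, hn, Nat.add_sub_cancel_left,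
    pow_add, pow_add, pow_add, mul_mul_mul_comm, Int.units_mul_self, one_mul, mul_comm]

theorem neg_one_pow_card_quot_sameCycle_mul_swap (g : Perm β) {u v : β} (huv : u ≠ v) :
    (-1 : ℤˣ) ^ Nat.card (Quot (g * swap u v).SameCycle) =
      -(-1) ^ Nat.card (Quot g.SameCycle) := by
  rw [neg_one_pow_card_quot_sameCycle, neg_one_pow_card_quot_sameCycle, Perm.sign_mul,
    sign_swap huv, mul_neg_one, neg_mul]

end SameCycle

theorem card_quot_or_eq_card_quot_sameCycle {S : Type*} [Finite S] {α σ : S → S}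
    {p : S → Prop} (hα : Involutive α) (hσ : Involutive σ)
    (hαp : ∀ e, p (α e) ↔ ¬ p e) (hσp : ∀ e, p (σ e) ↔ ¬ p e)
    (g : Perm {e // p e}) (hg : ∀ e, (g e : S) = α (σ e)) :
    Nat.card (Quot fun a b => α a = b ∨ σ a = b) = Nat.card (Quot g.SameCycle) := by
  classical
  set r : S → S → Prop := fun a b => α a = b ∨ σ a = b
  have mk_α : ∀ e, Quot.mk r (α e) = Quot.mk r e := fun e =>
    (Quot.sound (show r e (α e) from Or.inl rfl)).symm
  have mk_σ : ∀ e, Quot.mk r (σ e) = Quot.mk r e := fun e =>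
    (Quot.sound (show r e (σ e) from Or.inr rfl)).symm
  have mk_g : ∀ u, Quot.mk r (g u : S) = Quot.mk r u := fun u => by rw [hg, mk_α, mk_σ]
  let toQuot : Quot g.SameCycle → Quot r := Quot.lift (fun u => Quot.mk r u) fun u v huv => by
    obtain ⟨n, rfl⟩ := huv.exists_nat_pow_eq
    clear huv
    induction n with
    | zero => rfl
    | succ n ih => rw [pow_succ', Perm.mul_apply, mk_g, ih]
  -- each class of `r` is represented on the `p` side by `e` or by `σ e`
  let rep : S → Quot g.SameCycle := fun e =>
    if h : p e then Quot.mk _ ⟨e, h⟩ else Quot.mk _ ⟨σ e, (hσp e).2 h⟩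
  have rep_σ : ∀ e, rep (σ e) = rep e := fun e => by
    by_cases h : p e
    · have h' : ¬ p (σ e) := fun h' => (hσp e).1 h' h
      simp only [rep, dif_pos h, dif_neg h', hσ e]
    · simp only [rep, dif_pos ((hσp e).2 h), dif_neg h]
  have rep_α_of_p : ∀ e, p e → rep (α e) = rep e := fun e h => by
    have h' : ¬ p (α e) := fun h' => (hαp e).1 h' h
    simp only [rep, dif_pos h, dif_neg h']
    refine Quot.sound (sameCycle_apply_left.1 (Eq.sameCycle (Subtype.ext ?_) g))
    rw [hg, hσ, hα]
  have rep_α : ∀ e, rep (α e) = rep e := fun e => by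
    by_cases h : p e
    · exact rep_α_of_p e h
    · simpa only [hα e] using (rep_α_of_p (α e) ((hαp e).2 h)).symm
  let ofQuot : Quot r → Quot g.SameCycle := Quot.lift rep <| by
    rintro a b (rfl | rfl)
    exacts [(rep_α a).symm, (rep_σ a).symm]
  have hinj : Injective toQuot := by
    refine LeftInverse.injective (g := ofQuot) (Quot.ind fun u => ?_)
    exact dif_pos u.2
  have hsurj : Surjective toQuot := Quot.ind fun e => by
    by_cases h : p e
    · exact ⟨Quot.mk _ ⟨e, h⟩, rfl⟩
    · exact ⟨Quot.mk _ ⟨σ e, (hσp e).2 h⟩, mk_σ e⟩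
  exact (Nat.card_eq_of_bijective toQuot ⟨hinj, hsurj⟩).symm

section Diagram

variable {C : Type*}

abbrev IsEvenEnd (e : Ends C) : Prop := (e.2 : ℕ) % 2 = 0

def jordanRel (α : Ends C → Ends C) (x : C → Fin 4) (a b : Ends C) : Prop :=
  α a = b ∨ quadSmooth x a = b

def smoothFin (a i : Fin 4) : Fin 4 :=
  if i = a then a + 1 else if i = a + 1 then a else if i = a + 2 then a + 3 else a + 2

theorem quadSmooth_apply (x : C → Fin 4) (e : Ends C) :
    quadSmooth x e = (e.1, smoothFin (x e.1) e.2) := by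
  unfold quadSmooth smoothFin
  split_ifs <;> rfl

theorem quadSmooth_fst (x : C → Fin 4) (e : Ends C) : (quadSmooth x e).1 = e.1 := by
  rw [quadSmooth_apply]

theorem quadSmooth_involutive (x : C → Fin 4) : Involutive (quadSmooth x) := by
  have h : ∀ a i : Fin 4, smoothFin a (smoothFin a i) = i := by decide
  intro e
  rw [quadSmooth_apply, quadSmooth_apply, h]

theorem isEvenEnd_quadSmooth_iff (x : C → Fin 4) (e : Ends C) :
    IsEvenEnd (quadSmooth x e) ↔ ¬ IsEvenEnd e := by
  have h : ∀ a i : Fin 4, ((smoothFin a i : ℕ) % 2 = 0 ↔ ¬ (i : ℕ) % 2 = 0) := by decide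
  rw [quadSmooth_apply]
  exact h _ _

theorem isEvenEnd_arc_iff {α : Ends C → Ends C}
    (hcheq : ∀ q : Ends C, ((faceStep α q).2 : ℕ) % 2 = (q.2 : ℕ) % 2) (e : Ends C) :
    IsEvenEnd (α e) ↔ ¬ IsEvenEnd e := by
  have h3 : ∀ i : Fin 4, i + 3 + 1 = i := by decide
  have h3' : ∀ i : Fin 4, ((i + 3 : Fin 4) : ℕ) % 2 = 0 ↔ ¬ (i : ℕ) % 2 = 0 := by decide
  have := hcheq (e.1, e.2 + 3)
  simp only [faceStep, h3] at this
  rw [IsEvenEnd, IsEvenEnd, this, h3']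

theorem quadSmooth_rotate {x y : C → Fin 4} {c : C} (hc : y c = x c + 1 ∨ y c = x c - 1)
    (i : Fin 4) : quadSmooth y (c, i) = quadSmooth x (c, i + 2) := by
  have h : ∀ a b i : Fin 4, b = a + 1 ∨ b = a - 1 → smoothFin b i = smoothFin a (i + 2) := by
    decide
  rw [quadSmooth_apply, quadSmooth_apply, h _ _ _ hc]

theorem quadSmooth_eq_of_apply_eq {x y : C → Fin 4} {e : Ends C} (he : y e.1 = x e.1) :
    quadSmooth y e = quadSmooth x e := by
  rw [quadSmooth_apply, quadSmooth_apply, he]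

theorem jordanRel_or_of_eq_of_ne {α : Ends C → Ends C} {x y : C → Fin 4} {c : C}
    (hy : ∀ d, d ≠ c → y d = x d) {a b : Ends C} (h : jordanRel α y a b) :
    jordanRel α x a b ∨ a.1 = c ∧ b.1 = c := by
  rcases h with h | rfl
  · exact Or.inl (Or.inl h)
  · by_cases ha : a.1 = c
    · exact Or.inr ⟨ha, (quadSmooth_fst y a).trans ha⟩
    · exact Or.inl (Or.inr (quadSmooth_eq_of_apply_eq (hy _ ha)).symm)

theorem Jcount_le_card_quot_add_one [Finite C] (α : Ends C → Ends C) (x : C → Fin 4) (c : C)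
    {s : Ends C → Ends C → Prop}
    (hs : ∀ a b, s a b → jordanRel α x a b ∨ a.1 = c ∧ b.1 = c) :
    Jcount α x ≤ Nat.card (Quot s) + 1 := by
  set R : Ends C → Ends C → Prop := fun a b =>
    jordanRel α x a b ∨ a = (c, x c) ∧ b = (c, x c + 2)
  have hend : ∀ i, EqvGen R (c, x c) (c, i) := by
    have h4 : ∀ a i : Fin 4, i = a ∨ i = a + 1 ∨ i = a + 2 ∨ i = a + 3 := by decide
    have h0 : ∀ a : Fin 4, smoothFin a a = a + 1 ∧ smoothFin a (a + 2) = a + 3 := by decide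
    have h02 : EqvGen R (c, x c) (c, x c + 2) := .rel _ _ (Or.inr ⟨rfl, rfl⟩)
    have hsm : ∀ i, EqvGen R (c, i) (quadSmooth x (c, i)) := fun _ =>
      .rel _ _ (Or.inl (Or.inr rfl))
    intro i
    rcases h4 (x c) i with rfl | rfl | rfl | rfl
    · exact .refl _
    · simpa only [quadSmooth_apply, (h0 _).1] using hsm (x c)
    · exact h02
    · simpa only [quadSmooth_apply, (h0 _).2] using h02.trans _ _ _ (hsm _)
  refine card_quot_le_card_quot_add_one (c, x c) (c, x c + 2) fun a b hab => ?_
  rcases hs a b hab with h | ⟨ha, hb⟩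
  · exact .rel _ _ (Or.inl h)
  · obtain ⟨_, i⟩ := a
    obtain ⟨_, j⟩ := b
    subst ha hb
    exact (hend i).symm.trans _ _ _ (hend j)

theorem abs_Jcount_sub_le [Finite C] (α : Ends C → Ends C) {x y : C → Fin 4} {c : C}
    (hy : ∀ d, d ≠ c → y d = x d) : |(Jcount α y : ℤ) - Jcount α x| ≤ 1 := by
  set s : Ends C → Ends C → Prop := fun a b => jordanRel α x a b ∨ jordanRel α y a b
  have hxs : Jcount α x ≤ Nat.card (Quot s) + 1 :=
    Jcount_le_card_quot_add_one α x c fun _ _ => Or.rec Or.inl (jordanRel_or_of_eq_of_ne hy)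
  have hys : Jcount α y ≤ Nat.card (Quot s) + 1 :=
    Jcount_le_card_quot_add_one α y c fun _ _ =>
      Or.rec (jordanRel_or_of_eq_of_ne fun d hd => (hy d hd).symm) Or.inl
  have hsx : Nat.card (Quot s) ≤ Jcount α x := card_quot_le_of_le fun _ _ => Or.inl
  have hsy : Nat.card (Quot s) ≤ Jcount α y := card_quot_le_of_le fun _ _ => Or.inr
  exact abs_sub_le_iff.2 ⟨by omega, by omega⟩

section Arcs

variable {α : Ends C → Ends C} (hinv : Involutive α)
  (hpar : ∀ e, IsEvenEnd (α e) ↔ ¬ IsEvenEnd e)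
include hinv hpar

def evenReturn (x : C → Fin 4) : Perm {e : Ends C // IsEvenEnd e} :=
  (hinv.toPerm α * (quadSmooth_involutive x).toPerm _).subtypePerm fun e => by
    simp only [Perm.mul_apply, Involutive.coe_toPerm, hpar, isEvenEnd_quadSmooth_iff, not_not]

theorem Jcount_eq_card_quot_sameCycle [Finite C] (x : C → Fin 4) :
    Jcount α x = Nat.card (Quot (evenReturn hinv hpar x).SameCycle) :=
  card_quot_or_eq_card_quot_sameCycle hinv (quadSmooth_involutive x) hpar
    (isEvenEnd_quadSmooth_iff x) _ fun _ => rfl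

theorem evenReturn_rotate [DecidableEq C] {x y : C → Fin 4} {c : C}
    (hc : y c = x c + 1 ∨ y c = x c - 1) (hy : ∀ d, d ≠ c → y d = x d) :
    evenReturn hinv hpar y =
      evenReturn hinv hpar x * swap ⟨(c, 0), Nat.zero_mod 2⟩ ⟨(c, 2), Nat.mod_self 2⟩ := by
  refine Equiv.ext fun ⟨⟨d, i⟩, hi⟩ => Subtype.ext ?_
  simp only [evenReturn, Perm.mul_apply, subtypePerm_apply, Involutive.coe_toPerm]
  by_cases hd : d = c
  · subst hd
    have h02 : ∀ i : Fin 4, (i : ℕ) % 2 = 0 → i = 0 ∨ i = 2 := by decide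
    rcases h02 i hi with rfl | rfl
    · rw [swap_apply_left, quadSmooth_rotate hc]; rfl
    · rw [swap_apply_right, quadSmooth_rotate hc]; rfl
  · have hne : ∀ j hj, (⟨(d, i), hi⟩ : {e : Ends C // IsEvenEnd e}) ≠ ⟨(c, j), hj⟩ :=
      fun _ _ h => hd (congrArg (fun e => e.1.1) h)
    rw [swap_apply_of_ne_of_ne (hne _ _) (hne _ _),
      quadSmooth_eq_of_apply_eq (hy d hd)]

theorem Jcount_rotate_ne [Finite C] {x y : C → Fin 4} {c : C}
    (hc : y c = x c + 1 ∨ y c = x c - 1) (hy : ∀ d, d ≠ c → y d = x d) :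
    Jcount α y ≠ Jcount α x := by
  classical
  have := Fintype.ofFinite C
  intro h
  have key := neg_one_pow_card_quot_sameCycle_mul_swap (evenReturn hinv hpar x)
    (u := ⟨(c, 0), Nat.zero_mod 2⟩) (v := ⟨(c, 2), Nat.mod_self 2⟩)
    (by simp [Subtype.ext_iff])
  rw [← evenReturn_rotate hinv hpar hc hy, ← Jcount_eq_card_quot_sameCycle,
    ← Jcount_eq_card_quot_sameCycle, h] at key
  exact units_ne_neg_self _ key

theorem Jcount_sub_rotate [Finite C] {x y : C → Fin 4} {c : C}
    (hc : y c = x c + 1 ∨ y c = x c - 1) (hy : ∀ d, d ≠ c → y d = x d) :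
    (Jcount α y : ℤ) - Jcount α x = 1 ∨ (Jcount α y : ℤ) - Jcount α x = -1 := by
  have hne := Jcount_rotate_ne hinv hpar hc hy
  have hle := abs_Jcount_sub_le α hy
  rw [abs_le] at hle
  omega

end Arcs

end Diagram

theorem stmt19_general {C : Type*} [Fintype C] (α : Ends C → Ends C)
    (hinv : Function.Involutive α)
    (hcheq : ∀ q : Ends C, ((faceStep α q).2 : ℕ) % 2 = (q.2 : ℕ) % 2)
    (x x' : C → Fin 4)
    (c₁ c₂ : C) (hc : c₁ ≠ c₂)
    (hrot₁ : x' c₁ = x c₁ + 1 ∨ x' c₁ = x c₁ - 1)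
    (hrot₂ : x' c₂ = x c₂ + 1 ∨ x' c₂ = x c₂ - 1)
    (hrest : ∀ c, c ≠ c₁ → c ≠ c₂ → x' c = x c) :
    ((Jcount α x' : ℤ) - (Jcount α x : ℤ)) ∈ ({-2, 0, 2} : Set ℤ) := by
  classical
  have hpar := isEvenEnd_arc_iff hcheq
  let y := update x c₁ (x' c₁)
  have hy₁ : y c₁ = x' c₁ := update_self _ _ _
  have hy : ∀ d, d ≠ c₁ → y d = x d := fun d hd => update_of_ne hd _ _
  have step₁ := Jcount_sub_rotate hinv hpar (by rwa [hy₁]) hy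
  have step₂ := Jcount_sub_rotate hinv hpar (x := y) (c := c₂) (by rwa [hy c₂ hc.symm])
    fun d hd₂ => by
      rcases eq_or_ne d c₁ with rfl | hd₁
      · exact hy₁.symm
      · rw [hy d hd₁, hrest d hd₁ hd₂]
  simp only [Set.mem_insert_iff, Set.mem_singleton_iff]
  omega

/-- A clock move on a perfect admissible matching -- rotating by one
quadrant the dots of two distinct crossings `c₁, c₂` incident to a common square face
(here recorded by an arc of the diagram joining them), leaving all other crossings
unchanged -- changes the number of components of the Jordan resolution by `-2`, `0`
or `2`. -/
theorem stmt19 {C : Type*} [Fintype C] (α : Ends C → Ends C)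
    (hinv : Function.Involutive α) (hne : ∀ e, α e ≠ e)
    (hcheq : ∀ q : Ends C, ((faceStep α q).2 : ℕ) % 2 = (q.2 : ℕ) % 2)
    (x x' : C → Fin 4)
    (hpm : Function.Injective (fun c => regionOf α (c, x c)))
    (hpm' : Function.Injective (fun c => regionOf α (c, x' c)))
    (hadm : AdmissibleE α x) (hadm' : AdmissibleE α x')
    (c₁ c₂ : C) (hc : c₁ ≠ c₂)
    (hadj : ∃ i j : Fin 4, α (c₁, i) = (c₂, j))
    (hrot₁ : x' c₁ = x c₁ + 1 ∨ x' c₁ = x c₁ - 1)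
    (hrot₂ : x' c₂ = x c₂ + 1 ∨ x' c₂ = x c₂ - 1)
    (hrest : ∀ c, c ≠ c₁ → c ≠ c₂ → x' c = x c) :
    ((Jcount α x' : ℤ) - (Jcount α x : ℤ)) ∈ ({-2, 0, 2} : Set ℤ) :=
  stmt19_general α hinv hcheq x x' c₁ c₂ hc hrot₁ hrot₂ hrest
end
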